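/- arXiv:1602.06410 — 4 statements merged into one kernel-verified Lean document; each statement's English description precedes it below -/
import Mathlib

section
/- Suppose min_{i∈C*} e(i,C*) − max{ max_{i∉C*} e(i,C*), Kβ } > ‖L − L̄‖ − β, where ‖·‖ is the spectral norm. Then the true cluster matrix Z* = ξ*ξ*ᵀ is the unique optimal solution of SDP(L,K). -/
open Matrix MeasureTheory Filter

/-- Frobenius inner product ⟨A,B⟩ = ∑_{ij} A_{ij} B_{ij}. -/
noncomputable def ip {n : ℕ} (A B : Matrix (Fin n) (Fin n) ℝ) : ℝ :=
  ∑ i, ∑ j, A i j * B i j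

/-- Feasible set of the SDP (2.4): Z ⪰ 0, Z ≥ 0 entrywise, Z_{ii} ≤ 1, Tr Z = K, ⟨J,Z⟩ = K². -/
def sdpFeasible {n : ℕ} (K : ℕ) (Z : Matrix (Fin n) (Fin n) ℝ) : Prop :=
  Z.PosSemidef ∧ (∀ i j, 0 ≤ Z i j) ∧ (∀ i, Z i i ≤ 1) ∧
  (∑ i, Z i i) = (K : ℝ) ∧ (∑ i, ∑ j, Z i j) = (K : ℝ) ^ 2

/-- Z is an optimal solution of SDP(L,K). -/
noncomputable def sdpOptimal {n : ℕ} (L : Matrix (Fin n) (Fin n) ℝ) (K : ℕ)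
    (Z : Matrix (Fin n) (Fin n) ℝ) : Prop :=
  sdpFeasible K Z ∧ ∀ Z', sdpFeasible K Z' → ip L Z' ≤ ip L Z

/-- Z is the unique optimal solution of SDP(L,K). -/
noncomputable def sdpUniqueOpt {n : ℕ} (L : Matrix (Fin n) (Fin n) ℝ) (K : ℕ)
    (Z : Matrix (Fin n) (Fin n) ℝ) : Prop :=
  sdpOptimal L K Z ∧ ∀ Z', sdpOptimal L K Z' → Z' = Z

/-- Spectral norm of a real matrix (operator norm on Euclidean space). -/
noncomputable def specNorm {n : ℕ} (M : Matrix (Fin n) (Fin n) ℝ) : ℝ :=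
  ‖Matrix.toEuclideanCLM (𝕜 := ℝ) M‖

/-- Indicator vector of a subset of [n]. -/
def indVec {n : ℕ} (C : Finset (Fin n)) : Fin n → ℝ := fun i => if i ∈ C then 1 else 0

/-- True cluster matrix Z* = ξ*ξ*ᵀ. -/
noncomputable def clusterMat {n : ℕ} (C : Finset (Fin n)) : Matrix (Fin n) (Fin n) ℝ :=
  Matrix.of fun i j => indVec C i * indVec C j

section Aux

lemma quad_le_specNorm {n : ℕ} (M : Matrix (Fin n) (Fin n) ℝ) (y : Fin n → ℝ) :
    y ⬝ᵥ (M *ᵥ y) ≤ specNorm M * (∑ i, y i ^ 2) := by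
  set Y : EuclideanSpace ℝ (Fin n) := (WithLp.equiv 2 _).symm y with hY
  have hTY : (Matrix.toEuclideanCLM (𝕜 := ℝ) M) Y = (WithLp.equiv 2 _).symm (M *ᵥ y) := by
    rw [hY]; rfl
  have h1 : y ⬝ᵥ (M *ᵥ y) = inner ℝ Y ((Matrix.toEuclideanCLM (𝕜 := ℝ) M) Y) := by
    rw [hTY]
    simp [PiLp.inner_apply, dotProduct, hY, RCLike.inner_apply, mul_comm]
  have h2 : inner ℝ Y ((Matrix.toEuclideanCLM (𝕜 := ℝ) M) Y)
      ≤ ‖Y‖ * ‖(Matrix.toEuclideanCLM (𝕜 := ℝ) M) Y‖ := real_inner_le_norm _ _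
  have h3 : ‖(Matrix.toEuclideanCLM (𝕜 := ℝ) M) Y‖ ≤ specNorm M * ‖Y‖ :=
    (Matrix.toEuclideanCLM (𝕜 := ℝ) M).le_opNorm Y
  have h4 : ‖Y‖ * ‖Y‖ = ∑ i, y i ^ 2 := by
    rw [← real_inner_self_eq_norm_mul_norm]
    simp [PiLp.inner_apply, hY, RCLike.inner_apply, sq, -inner_self_eq_norm_sq_to_K]
  have h5 : (0:ℝ) ≤ ‖Y‖ := norm_nonneg _
  calc y ⬝ᵥ (M *ᵥ y) = inner ℝ Y ((Matrix.toEuclideanCLM (𝕜 := ℝ) M) Y) := h1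
    _ ≤ ‖Y‖ * ‖(Matrix.toEuclideanCLM (𝕜 := ℝ) M) Y‖ := h2
    _ ≤ ‖Y‖ * (specNorm M * ‖Y‖) := mul_le_mul_of_nonneg_left h3 h5
    _ = specNorm M * (‖Y‖ * ‖Y‖) := by ring
    _ = specNorm M * (∑ i, y i ^ 2) := by rw [h4]

lemma sum4_swap {α : Type*} [Fintype α] (f : α → α → α → α → ℝ) :
    ∑ i, ∑ j, ∑ k, ∑ l, f i j k l = ∑ k, ∑ l, ∑ i, ∑ j, f i j k l :=
  calc ∑ i, ∑ j, ∑ k, ∑ l, f i j k l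
      = ∑ i, ∑ k, ∑ j, ∑ l, f i j k l := Finset.sum_congr rfl fun _ _ => Finset.sum_comm
    _ = ∑ k, ∑ i, ∑ j, ∑ l, f i j k l := Finset.sum_comm
    _ = ∑ k, ∑ i, ∑ l, ∑ j, f i j k l :=
        Finset.sum_congr rfl fun _ _ => Finset.sum_congr rfl fun _ _ => Finset.sum_comm
    _ = ∑ k, ∑ l, ∑ i, ∑ j, f i j k l := Finset.sum_congr rfl fun _ _ => Finset.sum_comm

lemma key_factor {n : ℕ} (N P : Matrix (Fin n) (Fin n) ℝ) :
    ∑ i, ∑ j, (Nᴴ * N) i j * ((Pᴴ * P) i j) = ∑ k, ∑ l, (∑ i, N k i * P l i)^2 := by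
  have e1 : ∀ i j : Fin n, (Nᴴ * N) i j * ((Pᴴ * P) i j)
      = ∑ k, ∑ l, (N k i * P l i) * (N k j * P l j) := by
    intro i j
    simp only [Matrix.mul_apply, conjTranspose_apply, star_trivial]
    rw [Finset.sum_mul_sum]
    exact Finset.sum_congr rfl fun k _ => Finset.sum_congr rfl fun l _ => by ring
  calc ∑ i, ∑ j, (Nᴴ * N) i j * ((Pᴴ * P) i j)
      = ∑ i, ∑ j, ∑ k, ∑ l, (N k i * P l i) * (N k j * P l j) :=
        Finset.sum_congr rfl fun i _ => Finset.sum_congr rfl fun j _ => e1 i j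
    _ = ∑ k, ∑ l, ∑ i, ∑ j, (N k i * P l i) * (N k j * P l j) := sum4_swap _
    _ = ∑ k, ∑ l, (∑ i, N k i * P l i)^2 := by
        refine Finset.sum_congr rfl fun k _ => Finset.sum_congr rfl fun l _ => ?_
        rw [sq, Finset.sum_mul_sum]

lemma psd_factor {n : ℕ} {S : Matrix (Fin n) (Fin n) ℝ} (hS : S.PosSemidef) :
    ∃ N : Matrix (Fin n) (Fin n) ℝ, S = Nᴴ * N := by
  classical
  open scoped MatrixOrder in
  obtain ⟨N, hN⟩ := CStarAlgebra.nonneg_iff_eq_star_mul_self.mp hS.nonneg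
  exact ⟨N, hN⟩

lemma psd_ip_nonneg {n : ℕ} {S Z : Matrix (Fin n) (Fin n) ℝ}
    (hS : S.PosSemidef) (hZ : Z.PosSemidef) : 0 ≤ ∑ i, ∑ j, S i j * Z i j := by
  obtain ⟨N, rfl⟩ := psd_factor hS
  obtain ⟨P, rfl⟩ := psd_factor hZ
  rw [key_factor]
  positivity

lemma psd_ip_zero_mul {n : ℕ} {S Z : Matrix (Fin n) (Fin n) ℝ}
    (hS : S.PosSemidef) (hZ : Z.PosSemidef) (h0 : ∑ i, ∑ j, S i j * Z i j = 0) :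
    S * Z = 0 := by
  obtain ⟨N, rfl⟩ := psd_factor hS
  obtain ⟨P, rfl⟩ := psd_factor hZ
  rw [key_factor] at h0
  have hz : ∀ k l : Fin n, (∑ i, N k i * P l i) = 0 := by
    intro k l
    have hsq : ∀ k l : Fin n, (0:ℝ) ≤ (∑ i, N k i * P l i)^2 := fun _ _ => sq_nonneg _
    have h1 : ∀ k ∈ Finset.univ, (∑ l, (∑ i, N k i * P l i)^2 : ℝ) = 0 :=
      (Finset.sum_eq_zero_iff_of_nonneg (fun k _ => Finset.sum_nonneg fun l _ => hsq k l)).mp h0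
    have h2 := (Finset.sum_eq_zero_iff_of_nonneg (fun l _ => hsq k l)).mp
      (h1 k (Finset.mem_univ k)) l (Finset.mem_univ l)
    exact pow_eq_zero_iff (by norm_num) |>.mp h2
  ext a b
  simp only [Matrix.mul_apply, conjTranspose_apply, star_trivial, Matrix.zero_apply]
  have hpt : ∀ j : Fin n, (∑ k, N k a * N k j) * (∑ l, P l j * P l b)
      = ∑ k, ∑ l, (N k a * P l b) * (N k j * P l j) := by
    intro j
    rw [Finset.sum_mul_sum]
    exact Finset.sum_congr rfl fun k _ => Finset.sum_congr rfl fun l _ => by ring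
  calc ∑ j, (∑ k, N k a * N k j) * (∑ l, P l j * P l b)
      = ∑ j, ∑ k, ∑ l, (N k a * P l b) * (N k j * P l j) :=
        Finset.sum_congr rfl fun j _ => hpt j
    _ = ∑ k, ∑ j, ∑ l, (N k a * P l b) * (N k j * P l j) := Finset.sum_comm
    _ = ∑ k, ∑ l, ∑ j, (N k a * P l b) * (N k j * P l j) :=
        Finset.sum_congr rfl fun _ _ => Finset.sum_comm
    _ = ∑ k, ∑ l, (N k a * P l b) * (∑ j, N k j * P l j) := by
        refine Finset.sum_congr rfl fun k _ => Finset.sum_congr rfl fun l _ => ?_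
        rw [Finset.mul_sum]
    _ = 0 := by
        refine Finset.sum_eq_zero fun k _ => Finset.sum_eq_zero fun l _ => ?_
        rw [hz k l, mul_zero]

lemma sum_sum_mul {n : ℕ} (f g : Fin n → ℝ) :
    ∑ i, ∑ j, f i * g j = (∑ i, f i) * (∑ j, g j) := (Finset.sum_mul_sum _ _ _ _).symm

lemma sum_sum_cmul {n : ℕ} (c : ℝ) (f g : Fin n → ℝ) :
    ∑ i, ∑ j, c * (f i * g j) = c * ((∑ i, f i) * (∑ j, g j)) := by
  rw [← sum_sum_mul f g, Finset.mul_sum]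
  exact Finset.sum_congr rfl fun i _ => by rw [Finset.mul_sum]

lemma dot_expand {n : ℕ} (A : Matrix (Fin n) (Fin n) ℝ) (x : Fin n → ℝ) :
    x ⬝ᵥ (A *ᵥ x) = ∑ i, ∑ j, x i * A i j * x j := by
  simp [dotProduct, mulVec, Finset.mul_sum, mul_assoc]

end Aux

/-- Theorem 1 (sufficient condition for SDP, general case):
if min_{i∈C*} e(i,C*) − max{max_{j∉C*} e(j,C*), Kβ} > ‖L − E L‖ − β
then Z* is the unique optimal solution of the SDP.
The hypothesis "min − max{·,·} > RHS" is expressed pointwise, which is equivalent. -/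
theorem stmt0 {n : ℕ} (K : ℕ) (hK1 : 1 ≤ K) (hKn : K ≤ n)
    (Cstar : Finset (Fin n)) (hcard : Cstar.card = K)
    (L : Matrix (Fin n) (Fin n) ℝ) (hLsymm : L.IsSymm) (hLdiag : ∀ i, L i i = 0)
    (α β : ℝ) (hαβ : β ≤ α)
    (Lbar : Matrix (Fin n) (Fin n) ℝ)
    (hLbar : ∀ i j, Lbar i j =
      if i = j then 0 else if i ∈ Cstar ∧ j ∈ Cstar then α else β)
    (h : ∀ i ∈ Cstar,
      (∀ j ∉ Cstar,
        specNorm (L - Lbar) - β < (∑ k ∈ Cstar, L i k) - (∑ k ∈ Cstar, L j k)) ∧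
      specNorm (L - Lbar) - β < (∑ k ∈ Cstar, L i k) - (K : ℝ) * β) :
    sdpUniqueOpt L K (clusterMat Cstar) := by
  classical
  -- notation
  set ξ : Fin n → ℝ := indVec Cstar with hξdef
  set e : Fin n → ℝ := fun i => ∑ k ∈ Cstar, L i k with hedef
  set m : ℝ := specNorm (L - Lbar) with hmdef
  have hCne : Cstar.Nonempty := Finset.card_pos.mp (by rw [hcard]; exact hK1)
  have hKpos : (0:ℝ) < (K:ℝ) := by exact_mod_cast hK1
  have hKne : (K:ℝ) ≠ 0 := ne_of_gt hKpos
  have hLs : ∀ i j, L j i = L i j := fun i j => by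
    conv_lhs => rw [← hLsymm]
    simp [Matrix.transpose_apply]
  -- indicator sum helpers
  have hind : ∀ f : Fin n → ℝ, ∑ i, ξ i * f i = ∑ i ∈ Cstar, f i := by
    intro f
    simp only [hξdef, indVec, ite_mul, one_mul, zero_mul]
    rw [Finset.sum_ite_mem, Finset.univ_inter]
  have hind' : ∀ f : Fin n → ℝ, ∑ i, f i * ξ i = ∑ i ∈ Cstar, f i := by
    intro f
    rw [← hind f]
    exact Finset.sum_congr rfl fun i _ => mul_comm _ _
  have hcardsum : (∑ _i ∈ Cstar, (1:ℝ)) = (K:ℝ) := by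
    rw [Finset.sum_const, hcard, nsmul_eq_mul, mul_one]
  have hξsum : ∑ i, ξ i = (K:ℝ) := by
    have h1 := hind (fun _ => (1:ℝ))
    simp only [mul_one] at h1
    rw [h1, hcardsum]
  -- feasibility of Z*
  have hZs_apply : ∀ i j, clusterMat Cstar i j = ξ i * ξ j := fun i j => rfl
  have hZsfeas : sdpFeasible K (clusterMat Cstar) := by
    refine ⟨PosSemidef.of_dotProduct_mulVec_nonneg ?_ ?_, ?_, ?_, ?_, ?_⟩
    · ext i j
      simp [clusterMat, Matrix.conjTranspose_apply, mul_comm]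
    · intro x
      have hmv : ∀ i, (clusterMat Cstar *ᵥ x) i = ξ i * (∑ j, ξ j * x j) := by
        intro i
        simp [Matrix.mulVec, dotProduct, clusterMat, Finset.mul_sum, mul_assoc, hξdef]
      have hdp : (star x) ⬝ᵥ (clusterMat Cstar *ᵥ x) = (∑ j, ξ j * x j) * (∑ j, ξ j * x j) := by
        simp only [star_trivial, dotProduct]
        calc ∑ i, x i * (clusterMat Cstar *ᵥ x) i
            = ∑ i, (ξ i * x i) * (∑ j, ξ j * x j) :=
              Finset.sum_congr rfl fun i _ => by rw [hmv i]; ring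
          _ = (∑ i, ξ i * x i) * (∑ j, ξ j * x j) := by rw [Finset.sum_mul]
      rw [hdp]
      exact mul_self_nonneg _
    · intro i j
      simp only [hZs_apply, hξdef, indVec]
      positivity
    · intro i
      simp only [hZs_apply, hξdef, indVec]
      by_cases hi : i ∈ Cstar <;> simp [hi]
    · have : ∀ i, clusterMat Cstar i i = ξ i := by
        intro i
        simp only [hZs_apply, hξdef, indVec]
        by_cases hi : i ∈ Cstar <;> simp [hi]
      rw [Finset.sum_congr rfl fun i _ => this i, hξsum]
    · have : ∀ i, ∑ j, clusterMat Cstar i j = ξ i * (K:ℝ) := by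
        intro i
        simp only [hZs_apply]
        rw [← Finset.mul_sum, hξsum]
      rw [Finset.sum_congr rfl fun i _ => this i, ← Finset.sum_mul, hξsum, sq]
  -- dual certificate parameters
  have htne : (insert ((K:ℝ)*β) (Cstarᶜ.image e)).Nonempty := ⟨_, Finset.mem_insert_self _ _⟩
  set t : ℝ := (insert ((K:ℝ)*β) (Cstarᶜ.image e)).max' htne with htdef
  have ht_kb : (K:ℝ)*β ≤ t := Finset.le_max' _ _ (Finset.mem_insert_self _ _)
  have ht_ge : ∀ j, j ∉ Cstar → e j ≤ t := fun j hj =>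
    Finset.le_max' _ _ (Finset.mem_insert_of_mem
      (Finset.mem_image_of_mem e (Finset.mem_compl.mpr hj)))
  have ht_lt : ∀ i ∈ Cstar, m - β < e i - t := by
    intro i hi
    have hmem : t ∈ insert ((K:ℝ)*β) (Cstarᶜ.image e) := by
      rw [htdef]; exact Finset.max'_mem _ htne
    rcases Finset.mem_insert.mp hmem with h1 | h1
    · rw [h1]; exact (h i hi).2
    · obtain ⟨j, hj, hjt⟩ := Finset.mem_image.mp h1
      rw [← hjt]; exact (h i hi).1 j (Finset.mem_compl.mp hj)
  have hene : (Cstar.image e).Nonempty := hCne.image e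
  set emin : ℝ := (Cstar.image e).min' hene with hemindef
  have hemin_le : ∀ i ∈ Cstar, emin ≤ e i := fun i hi =>
    Finset.min'_le _ _ (Finset.mem_image_of_mem e hi)
  obtain ⟨i₀, hi₀, hei₀⟩ := Finset.mem_image.mp (Finset.min'_mem _ hene)
  set μ : ℝ := emin - t with hμdef
  set δ : ℝ := μ + β - m with hδdef
  have hδpos : 0 < δ := by
    have h2 := ht_lt i₀ hi₀
    rw [hei₀] at h2
    simp only [hδdef, hμdef]
    linarith
  set d : Fin n → ℝ := fun i => if i ∈ Cstar then e i - emin else 0 with hddef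
  have hd0 : ∀ i, 0 ≤ d i := by
    intro i
    simp only [hddef]
    split
    · next hi => linarith [hemin_le i hi]
    · exact le_refl 0
  set B : Matrix (Fin n) (Fin n) ℝ := Matrix.of (fun i j =>
    if i ∈ Cstar ∧ j ∉ Cstar then (t - e j)/(K:ℝ)
    else if j ∈ Cstar ∧ i ∉ Cstar then (t - e i)/(K:ℝ) else 0) with hBdef
  have hBapp : ∀ i j, B i j =
      (if i ∈ Cstar ∧ j ∉ Cstar then (t - e j)/(K:ℝ)
      else if j ∈ Cstar ∧ i ∉ Cstar then (t - e i)/(K:ℝ) else 0) := fun i j => rfl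
  have hB0 : ∀ i j, 0 ≤ B i j := by
    intro i j
    rw [hBapp]
    split_ifs with h1 h2
    · exact div_nonneg (by linarith [ht_ge j h1.2]) hKpos.le
    · exact div_nonneg (by linarith [ht_ge i h2.2]) hKpos.le
    · exact le_refl 0
  have hBsymm : ∀ i j, B i j = B j i := by
    intro i j
    rw [hBapp, hBapp]
    by_cases h1 : i ∈ Cstar <;> by_cases h2 : j ∈ Cstar <;> simp [h1, h2]
  set S : Matrix (Fin n) (Fin n) ℝ := Matrix.of (fun i j =>
    (if i = j then d i + μ else 0) + t/(K:ℝ) - L i j - B i j) with hSdef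
  have hSapp : ∀ i j, S i j =
      (if i = j then d i + μ else 0) + t/(K:ℝ) - L i j - B i j := fun i j => rfl
  have hSsymm : ∀ i j, S i j = S j i := by
    intro i j
    rw [hSapp, hSapp, hBsymm i j, hLs j i]
    by_cases hij : i = j
    · subst hij; rfl
    · simp [hij, Ne.symm hij]
  have hrowS : ∀ i, ∑ j ∈ Cstar, S i j = 0 := by
    intro i
    have he_i : (∑ j ∈ Cstar, L i j) = e i := rfl
    have hsplit : ∑ j ∈ Cstar, S i j
        = (∑ j ∈ Cstar, (if i = j then d i + μ else 0)) + (∑ _j ∈ Cstar, t/(K:ℝ))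
          - (∑ j ∈ Cstar, L i j) - (∑ j ∈ Cstar, B i j) := by
      simp only [hSapp, Finset.sum_sub_distrib, Finset.sum_add_distrib]
    have hconst : (∑ _j ∈ Cstar, t/(K:ℝ)) = t := by
      rw [Finset.sum_const, hcard, nsmul_eq_mul]
      field_simp
    by_cases hi : i ∈ Cstar
    · have h1 : (∑ j ∈ Cstar, (if i = j then d i + μ else 0)) = d i + μ := by
        rw [Finset.sum_ite_eq Cstar i (fun _ => d i + μ)]
        simp [hi]
      have h2 : ∀ j ∈ Cstar, B i j = 0 := by
        intro j hj
        rw [hBapp]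
        simp [hi, hj]
      have h3 : d i = e i - emin := by simp [hddef, hi]
      rw [hsplit, h1, hconst, Finset.sum_eq_zero h2, he_i, h3]
      simp only [hμdef]
      ring
    · have h1 : (∑ j ∈ Cstar, (if i = j then d i + μ else 0)) = 0 := by
        rw [Finset.sum_ite_eq Cstar i (fun _ => d i + μ)]
        simp [hi]
      have h2 : ∀ j ∈ Cstar, B i j = (t - e i)/(K:ℝ) := by
        intro j hj
        rw [hBapp]
        simp [hi, hj]
      have h3 : (∑ j ∈ Cstar, B i j) = t - e i := by
        rw [Finset.sum_congr rfl h2, Finset.sum_const, hcard, nsmul_eq_mul]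
        field_simp
      rw [hsplit, h1, hconst, h3, he_i]
      ring
  -- S annihilates ξ
  have hmulξ : ∀ i, (∑ j, S i j * ξ j) = 0 := by
    intro i
    rw [hind' (fun j => S i j)]
    exact hrowS i
  have hmulξ' : ∀ j, (∑ i, ξ i * S i j) = 0 := by
    intro j
    have hc : ∀ i, ξ i * S i j = S j i * ξ i := fun i => by rw [hSsymm j i]; ring
    rw [Finset.sum_congr rfl fun i _ => hc i, hind' (fun i => S j i)]
    exact hrowS j
  -- quadratic form bound on the orthogonal complement of ξ
  have hquadS : ∀ y : Fin n → ℝ, (∑ i ∈ Cstar, y i) = 0 →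
      δ * (∑ i, y i ^ 2) ≤ ∑ i, ∑ j, y i * S i j * y j := by
    intro y hy0
    set b : ℝ := ∑ i, y i with hbdef
    set q : ℝ := ∑ i, y i ^ 2 with hqdef
    set s : ℝ := ∑ i ∈ Cstar, y i ^ 2 with hsdef
    have hs0 : 0 ≤ s := Finset.sum_nonneg fun i _ => sq_nonneg _
    have hq0 : 0 ≤ q := Finset.sum_nonneg fun i _ => sq_nonneg _
    have ha : ∑ i, ξ i * y i = 0 := by rw [hind]; exact hy0
    have hA1 : ∑ i, ∑ j, y i * (if i = j then d i + μ else 0) * y j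
        = ∑ i, (d i + μ) * y i ^ 2 := by
      refine Finset.sum_congr rfl fun i _ => ?_
      calc ∑ j, y i * (if i = j then d i + μ else 0) * y j
          = ∑ j, (if i = j then y i * (d i + μ) * y j else 0) :=
            Finset.sum_congr rfl fun j _ => by by_cases hij : i = j <;> simp [hij]
        _ = y i * (d i + μ) * y i := by rw [Finset.sum_ite_eq]; simp
        _ = (d i + μ) * y i ^ 2 := by ring
    have hA2 : ∑ i, ∑ j, y i * (t/(K:ℝ)) * y j = (t/(K:ℝ)) * b^2 := by
      have hpt : ∀ i j, y i * (t/(K:ℝ)) * y j = (t/(K:ℝ)) * (y i * y j) := fun i j => by ring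
      rw [Finset.sum_congr rfl fun i _ => Finset.sum_congr rfl fun j _ => hpt i j,
        sum_sum_cmul (t/(K:ℝ)) y y]
      rw [← hbdef, sq]
    have hB_quad : ∑ i, ∑ j, y i * B i j * y j = 0 := by
      have inner1 : ∀ i ∈ Cstar, ∑ j, y i * B i j * y j
          = y i * (∑ j ∈ Cstarᶜ, (t - e j)/(K:ℝ) * y j) := by
        intro i hi
        rw [Finset.mul_sum]
        rw [show (∑ j ∈ Cstarᶜ, y i * ((t - e j)/(K:ℝ) * y j))
            = ∑ j ∈ Finset.univ ∩ Cstarᶜ, y i * ((t - e j)/(K:ℝ) * y j) by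
          rw [Finset.univ_inter]]
        rw [← Finset.sum_ite_mem]
        refine Finset.sum_congr rfl fun j _ => ?_
        rw [hBapp]
        by_cases hj : j ∈ Cstar <;> simp [hi, hj] <;> ring
      have inner2 : ∀ i ∉ Cstar, ∑ j, y i * B i j * y j = 0 := by
        intro i hi
        have : ∀ j, y i * B i j * y j = (if j ∈ Cstar then (y i * ((t - e i)/(K:ℝ))) * y j else 0) := by
          intro j
          rw [hBapp]
          by_cases hj : j ∈ Cstar <;> simp [hi, hj] <;> ring
        rw [Finset.sum_congr rfl fun j _ => this j, Finset.sum_ite_mem, Finset.univ_inter,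
          ← Finset.mul_sum, hy0, mul_zero]
      rw [← Finset.sum_add_sum_compl Cstar (fun i => ∑ j, y i * B i j * y j)]
      rw [Finset.sum_congr rfl inner1, Finset.sum_congr rfl (fun i hi => inner2 i (Finset.mem_compl.mp hi)),
        Finset.sum_const, smul_zero, add_zero, ← Finset.sum_mul, hy0, zero_mul]
    have hLbar_quad : ∑ i, ∑ j, y i * Lbar i j * y j = β*b^2 - β*q - (α-β)*s := by
      have hpt : ∀ i j, y i * Lbar i j * y j
          = (α-β)*((ξ i * y i) * (ξ j * y j)) + β*(y i * y j)
            - (if i = j then ((α-β)*(ξ i * (y i * y i)) + β*(y i * y i)) else 0) := by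
        intro i j
        rw [hLbar i j]
        by_cases hij : i = j
        · subst hij
          by_cases hi : i ∈ Cstar <;> simp [hi, hξdef, indVec] <;> ring
        · by_cases hi : i ∈ Cstar <;> by_cases hj : j ∈ Cstar <;>
            simp [hij, hi, hj, hξdef, indVec] <;> ring
      rw [Finset.sum_congr rfl fun i _ => Finset.sum_congr rfl fun j _ => hpt i j]
      simp only [Finset.sum_sub_distrib, Finset.sum_add_distrib]
      have t1 : ∑ i, ∑ j, (α-β)*((ξ i * y i) * (ξ j * y j))
          = (α-β)*((∑ i, ξ i * y i) * (∑ j, ξ j * y j)) :=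
        sum_sum_cmul (α-β) (fun i => ξ i * y i) (fun j => ξ j * y j)
      have t2 : ∑ i, ∑ j, β*(y i * y j) = β*(b*b) := sum_sum_cmul β y y
      have t3 : ∑ i, ∑ j, (if i = j then ((α-β)*(ξ i * (y i * y i)) + β*(y i * y i)) else 0)
          = (α-β)*s + β*q := by
        have e3 : ∀ i, ∑ j, (if i = j then ((α-β)*(ξ i * (y i * y i)) + β*(y i * y i)) else 0)
            = (α-β)*(ξ i * (y i * y i)) + β*(y i * y i) := by
          intro i
          rw [Finset.sum_ite_eq]
          simp
        rw [Finset.sum_congr rfl fun i _ => e3 i]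
        rw [Finset.sum_add_distrib, ← Finset.mul_sum, ← Finset.mul_sum, hind (fun i => y i * y i)]
        have : (∑ i ∈ Cstar, y i * y i) = s := by
          rw [hsdef]
          exact Finset.sum_congr rfl fun i _ => (sq (y i)) ▸ rfl
        rw [this]
        have : (∑ i, y i * y i) = q := by
          rw [hqdef]
          exact Finset.sum_congr rfl fun i _ => (sq (y i)) ▸ rfl
        rw [this]
      rw [t1, t2, t3, ha]
      ring
    have hM_quad : ∑ i, ∑ j, y i * (L - Lbar) i j * y j ≤ m * q := by
      rw [← dot_expand]
      exact quad_le_specNorm _ y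
    have hL_quad : ∑ i, ∑ j, y i * L i j * y j ≤ β*b^2 - β*q - (α-β)*s + m * q := by
      have hsplitL : ∀ i j, y i * L i j * y j
          = y i * Lbar i j * y j + y i * ((L - Lbar) i j) * y j := by
        intro i j
        simp only [Matrix.sub_apply]
        ring
      rw [Finset.sum_congr rfl fun i _ => Finset.sum_congr rfl fun j _ => hsplitL i j]
      simp only [Finset.sum_add_distrib]
      rw [hLbar_quad]
      linarith [hM_quad]
    have hexpand : ∑ i, ∑ j, y i * S i j * y j
        = (∑ i, (d i + μ) * y i ^ 2) + (t/(K:ℝ)) * b^2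
          - (∑ i, ∑ j, y i * L i j * y j) - 0 := by
      have hpt : ∀ i j, y i * S i j * y j
          = y i * (if i = j then d i + μ else 0) * y j + y i * (t/(K:ℝ)) * y j
            - y i * L i j * y j - y i * B i j * y j := by
        intro i j
        rw [hSapp]
        ring
      rw [Finset.sum_congr rfl fun i _ => Finset.sum_congr rfl fun j _ => hpt i j]
      simp only [Finset.sum_sub_distrib, Finset.sum_add_distrib]
      rw [hA1, hA2, hB_quad]
    have hd_term : (∑ i, μ * y i ^ 2) ≤ ∑ i, (d i + μ) * y i ^ 2 :=
      Finset.sum_le_sum fun i _ =>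
        mul_le_mul_of_nonneg_right (by linarith [hd0 i]) (sq_nonneg _)
    have hμq : (∑ i, μ * y i ^ 2) = μ * q := by rw [← Finset.mul_sum, hqdef]
    have htb : β * b^2 ≤ (t/(K:ℝ)) * b^2 := by
      refine mul_le_mul_of_nonneg_right ?_ (sq_nonneg b)
      rw [le_div_iff₀ hKpos]
      linarith [ht_kb]
    have habs : 0 ≤ (α-β)*s := mul_nonneg (by linarith) hs0
    have hδq : δ * q = μ*q + β*q - m*q := by rw [hδdef]; ring
    linarith [hexpand, hd_term, hL_quad, htb, habs, hμq, hδq]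
  -- decomposition of arbitrary x along ξ
  have hdecomp : ∀ x : Fin n → ℝ, ∃ y : Fin n → ℝ, (∑ i ∈ Cstar, y i) = 0 ∧
      (∀ i, x i = y i + ((∑ k ∈ Cstar, x k)/(K:ℝ)) * ξ i) ∧
      (∑ i, ∑ j, x i * S i j * x j = ∑ i, ∑ j, y i * S i j * y j) := by
    intro x
    set c : ℝ := (∑ k ∈ Cstar, x k)/(K:ℝ) with hcdef
    set y : Fin n → ℝ := fun i => x i - c * ξ i with hydef
    have hxi : ∀ i, x i = y i + c * ξ i := fun i => by
      show x i = (x i - c * ξ i) + c * ξ i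
      ring
    refine ⟨y, ?_, hxi, ?_⟩
    · have hcc : ∀ i ∈ Cstar, y i = x i - c := by
        intro i hi
        show x i - c * ξ i = x i - c
        simp [hξdef, indVec, hi]
      rw [Finset.sum_congr rfl hcc, Finset.sum_sub_distrib, Finset.sum_const, hcard,
        nsmul_eq_mul, hcdef]
      field_simp
      ring
    · have hpt : ∀ i j, x i * S i j * x j
          = y i * S i j * y j + (c * (ξ i * S i j * y j)
            + (c * (y i * S i j * ξ j) + c * c * (ξ i * S i j * ξ j))) := fun i j => by
        rw [hxi i, hxi j]; ring
      rw [Finset.sum_congr rfl fun i _ => Finset.sum_congr rfl fun j _ => hpt i j]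
      simp only [Finset.sum_add_distrib]
      have z1 : ∑ i, ∑ j, c * (ξ i * S i j * y j) = 0 := by
        rw [Finset.sum_comm]
        refine Finset.sum_eq_zero fun j _ => ?_
        have hc : ∀ i, c * (ξ i * S i j * y j) = (ξ i * S i j) * (c * y j) := fun i => by ring
        rw [Finset.sum_congr rfl fun i _ => hc i, ← Finset.sum_mul, hmulξ' j, zero_mul]
      have z2 : ∑ i, ∑ j, c * (y i * S i j * ξ j) = 0 := by
        refine Finset.sum_eq_zero fun i _ => ?_
        have hc : ∀ j, c * (y i * S i j * ξ j) = (S i j * ξ j) * (c * y i) := fun j => by ring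
        rw [Finset.sum_congr rfl fun j _ => hc j, ← Finset.sum_mul, hmulξ i, zero_mul]
      have z3 : ∑ i, ∑ j, c * c * (ξ i * S i j * ξ j) = 0 := by
        refine Finset.sum_eq_zero fun i _ => ?_
        have hc : ∀ j, c * c * (ξ i * S i j * ξ j) = (S i j * ξ j) * (c * c * ξ i) := fun j => by
          ring
        rw [Finset.sum_congr rfl fun j _ => hc j, ← Finset.sum_mul, hmulξ i, zero_mul]
      rw [z1, z2, z3, add_zero, add_zero, add_zero]
  -- S is positive semidefinite
  have hSpsd : S.PosSemidef := by
    refine PosSemidef.of_dotProduct_mulVec_nonneg ?_ ?_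
    · ext i j
      simp only [Matrix.conjTranspose_apply, star_trivial]
      exact hSsymm j i
    · intro x
      simp only [star_trivial]
      rw [dot_expand]
      obtain ⟨y, hy0, _, hxy⟩ := hdecomp x
      rw [hxy]
      have h1 := hquadS y hy0
      have h2 : 0 ≤ ∑ i, y i ^ 2 := Finset.sum_nonneg fun i _ => sq_nonneg _
      nlinarith [hδpos]
  -- kernel of S is spanned by ξ
  have hker : ∀ x : Fin n → ℝ, S *ᵥ x = 0 →
      ∀ i, x i = ((∑ k ∈ Cstar, x k)/(K:ℝ)) * ξ i := by
    intro x hx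
    obtain ⟨y, hy0, hxe, hxy⟩ := hdecomp x
    have hx0 : ∑ i, ∑ j, x i * S i j * x j = 0 := by
      rw [← dot_expand, hx, dotProduct_zero]
    have h1 := hquadS y hy0
    rw [← hxy, hx0] at h1
    have h2 : 0 ≤ ∑ i, y i ^ 2 := Finset.sum_nonneg fun i _ => sq_nonneg _
    have hy2 : ∑ i, y i ^ 2 = 0 := by nlinarith [hδpos]
    have hyz : ∀ i, y i = 0 := by
      intro i
      have h3 := (Finset.sum_eq_zero_iff_of_nonneg (fun i _ => sq_nonneg (y i))).mp hy2 i
        (Finset.mem_univ i)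
      exact pow_eq_zero_iff two_ne_zero |>.mp h3
    intro i
    have h4 := hxe i
    rw [hyz i, zero_add] at h4
    exact h4
  -- inner products with Z*
  have hipS_Zs : ip S (clusterMat Cstar) = 0 := by
    unfold ip
    have hc : ∀ i j, S i j * clusterMat Cstar i j = (S i j * ξ j) * ξ i := fun i j => by
      rw [hZs_apply]; ring
    rw [Finset.sum_congr rfl fun i _ => Finset.sum_congr rfl fun j _ => hc i j]
    refine Finset.sum_eq_zero fun i _ => ?_
    rw [← Finset.sum_mul, hmulξ i, zero_mul]
  have hipB_Zs : ip B (clusterMat Cstar) = 0 := by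
    unfold ip
    refine Finset.sum_eq_zero fun i _ => Finset.sum_eq_zero fun j _ => ?_
    rw [hBapp, hZs_apply]
    by_cases hi : i ∈ Cstar <;> by_cases hj : j ∈ Cstar <;> simp [hξdef, indVec, hi, hj]
  -- value of the objective on feasible Z
  have hipL : ∀ Z : Matrix (Fin n) (Fin n) ℝ, sdpFeasible K Z →
      ip L Z = (∑ i, (d i + μ) * Z i i) + t*(K:ℝ) - ip B Z - ip S Z := by
    intro Z hZ
    obtain ⟨hpsd, hnn, hdiagZ, htr, hsum⟩ := hZ
    unfold ip
    have hpt : ∀ i j, L i j * Z i j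
        = (if i = j then d i + μ else 0) * Z i j + (t/(K:ℝ)) * Z i j
          - B i j * Z i j - S i j * Z i j := by
      intro i j
      rw [hSapp i j]
      ring
    rw [Finset.sum_congr rfl fun i _ => Finset.sum_congr rfl fun j _ => hpt i j]
    simp only [Finset.sum_sub_distrib, Finset.sum_add_distrib]
    have h1 : ∑ i, ∑ j, (if i = j then d i + μ else 0) * Z i j = ∑ i, (d i + μ) * Z i i := by
      refine Finset.sum_congr rfl fun i _ => ?_
      calc ∑ j, (if i = j then d i + μ else 0) * Z i j
          = ∑ j, (if i = j then (d i + μ) * Z i j else 0) :=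
            Finset.sum_congr rfl fun j _ => by by_cases hij : i = j <;> simp [hij]
        _ = (d i + μ) * Z i i := by rw [Finset.sum_ite_eq]; simp
    have h2 : ∑ i, ∑ j, (t/(K:ℝ)) * Z i j = t * (K:ℝ) := by
      have hmm : ∑ i, ∑ j, (t/(K:ℝ)) * Z i j = (t/(K:ℝ)) * ∑ i, ∑ j, Z i j := by
        rw [Finset.mul_sum]
        exact Finset.sum_congr rfl fun i _ => by rw [Finset.mul_sum]
      rw [hmm, hsum]
      field_simp
    rw [h1, h2]
  -- master identity
  have hdiff : ∀ Z, sdpFeasible K Z →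
      ip L (clusterMat Cstar) - ip L Z
        = (∑ i, d i * (clusterMat Cstar i i - Z i i)) + ip B Z + ip S Z := by
    intro Z hZ
    have htrZ := hZ.2.2.2.1
    have htrZs := hZsfeas.2.2.2.1
    rw [hipL Z hZ, hipL _ hZsfeas, hipB_Zs, hipS_Zs]
    have expand1 : ∑ i, (d i + μ) * clusterMat Cstar i i
        = ∑ i, d i * clusterMat Cstar i i + μ * (K:ℝ) := by
      have hp : ∀ i, (d i + μ) * clusterMat Cstar i i
          = d i * clusterMat Cstar i i + μ * clusterMat Cstar i i := fun i => by ring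
      rw [Finset.sum_congr rfl fun i _ => hp i, Finset.sum_add_distrib, ← Finset.mul_sum, htrZs]
    have expand2 : ∑ i, (d i + μ) * Z i i = ∑ i, d i * Z i i + μ * (K:ℝ) := by
      have hp : ∀ i, (d i + μ) * Z i i = d i * Z i i + μ * Z i i := fun i => by ring
      rw [Finset.sum_congr rfl fun i _ => hp i, Finset.sum_add_distrib, ← Finset.mul_sum, htrZ]
    have expand3 : ∑ i, d i * (clusterMat Cstar i i - Z i i)
        = ∑ i, d i * clusterMat Cstar i i - ∑ i, d i * Z i i := by
      rw [← Finset.sum_sub_distrib]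
      exact Finset.sum_congr rfl fun i _ => by ring
    rw [expand1, expand2, expand3]
    ring
  -- nonnegativity of the three terms
  have hterm1 : ∀ Z, sdpFeasible K Z → 0 ≤ ∑ i, d i * (clusterMat Cstar i i - Z i i) := by
    intro Z hZ
    refine Finset.sum_nonneg fun i _ => ?_
    by_cases hi : i ∈ Cstar
    · have hz1 : clusterMat Cstar i i = 1 := by simp [hZs_apply, hξdef, indVec, hi]
      rw [hz1]
      exact mul_nonneg (hd0 i) (by linarith [hZ.2.2.1 i])
    · have hz0 : d i = 0 := by simp [hddef, hi]
      rw [hz0, zero_mul]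
  have hipB_nn : ∀ Z, sdpFeasible K Z → 0 ≤ ip B Z := fun Z hZ =>
    Finset.sum_nonneg fun i _ => Finset.sum_nonneg fun j _ =>
      mul_nonneg (hB0 i j) (hZ.2.1 i j)
  have hipS_nn : ∀ Z, sdpFeasible K Z → 0 ≤ ip S Z := fun Z hZ => psd_ip_nonneg hSpsd hZ.1
  -- optimality
  have hopt : sdpOptimal L K (clusterMat Cstar) := by
    refine ⟨hZsfeas, fun Z hZ => ?_⟩
    have hid := hdiff Z hZ
    linarith [hterm1 Z hZ, hipB_nn Z hZ, hipS_nn Z hZ]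
  refine ⟨hopt, ?_⟩
  -- uniqueness
  intro Z' hZ'
  have hfeas' := hZ'.1
  have hge : ip L (clusterMat Cstar) ≤ ip L Z' := hZ'.2 _ hZsfeas
  have hdiff' := hdiff Z' hfeas'
  have hS0 : ip S Z' = 0 := by
    have h1 := hterm1 Z' hfeas'
    have h2 := hipB_nn Z' hfeas'
    have h3 := hipS_nn Z' hfeas'
    linarith
  have hSZ : S * Z' = 0 := psd_ip_zero_mul hSpsd hfeas'.1 hS0
  have hcol : ∀ j i, Z' i j = ((∑ k ∈ Cstar, Z' k j)/(K:ℝ)) * ξ i := by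
    intro j
    have hxj : S *ᵥ (fun i => Z' i j) = 0 := by
      funext i
      have he0 := congrFun (congrFun hSZ i) j
      simpa [Matrix.mul_apply, Matrix.mulVec, dotProduct] using he0
    exact hker _ hxj
  set c : Fin n → ℝ := fun j => (∑ k ∈ Cstar, Z' k j)/(K:ℝ) with hcdef2
  have hsym' : ∀ i j, Z' i j = Z' j i := by
    intro i j
    have hherm := hfeas'.1.1
    conv_rhs => rw [← hherm]
    simp [Matrix.conjTranspose_apply]
  obtain ⟨i₀b, hi₀b⟩ := hCne
  have hcj0 : ∀ j ∉ Cstar, c j = 0 := by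
    intro j hj
    have h1 : Z' i₀b j = c j := by rw [hcol j i₀b]; simp [hξdef, indVec, hi₀b, hcdef2]
    have h2 : Z' j i₀b = 0 := by rw [hcol i₀b j]; simp [hξdef, indVec, hj]
    rw [hsym' i₀b j, h2] at h1
    exact h1.symm
  have hceq : ∀ i ∈ Cstar, ∀ j ∈ Cstar, c i = c j := by
    intro i hi j hj
    have h1 : Z' i j = c j := by rw [hcol j i]; simp [hξdef, indVec, hi, hcdef2]
    have h2 : Z' j i = c i := by rw [hcol i j]; simp [hξdef, indVec, hj, hcdef2]
    rw [hsym' i j, h2] at h1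
    exact h1
  have htr' := hfeas'.2.2.2.1
  have htrace : ∑ i, Z' i i = ∑ i ∈ Cstar, c i := by
    have hp : ∀ i, Z' i i = c i * ξ i := fun i => hcol i i
    rw [Finset.sum_congr rfl fun i _ => hp i, hind' c]
  have hsumc : ∑ i ∈ Cstar, c i = (K:ℝ) * c i₀b := by
    rw [Finset.sum_congr rfl (fun i hi => hceq i hi i₀b hi₀b), Finset.sum_const, hcard,
      nsmul_eq_mul]
  have hc1 : c i₀b = 1 := by
    have h5 : ∑ i, Z' i i = (K:ℝ) * c i₀b := by rw [htrace, hsumc]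
    have hKK : (K:ℝ) = (K:ℝ) * c i₀b := htr'.symm.trans h5
    have h6 := mul_left_cancel₀ hKne (by rw [mul_one]; exact hKK : (K:ℝ) * 1 = (K:ℝ) * c i₀b)
    exact h6.symm
  ext i j
  rw [show Z' i j = c j * ξ i from hcol j i, hZs_apply]
  by_cases hj : j ∈ Cstar
  · have hcj : c j = 1 := by rw [hceq j hj i₀b hi₀b, hc1]
    rw [hcj]
    simp [hξdef, indVec, hj]
  · rw [hcj0 j hj]
    simp [hξdef, indVec, hj]
end

section
/- For any 0 < q ≤ p < 1: (p−q)²/(2p(1−q)) ≤ d(p‖q) ≤ (p−q)²/(q(1−q)), and (p−q)²/(2p(1−q)) ≤ d(q‖p) ≤ (p−q)²/(p(1−p)). -/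
open Real

/-- Binary KL divergence d(x‖y) between Bern(x) and Bern(y). -/
noncomputable def klBer (x y : ℝ) : ℝ :=
  x * Real.log (x / y) + (1 - x) * Real.log ((1 - x) / (1 - y))

open Real

private lemma logAuxA {t : ℝ} (ht : 1 ≤ t) :
    (t - 1) / t + (t - 1) ^ 2 / (2 * t ^ 2) ≤ Real.log t := by
  set f : ℝ → ℝ := fun x => Real.log x - (x - 1) / x - (x - 1) ^ 2 / (2 * x ^ 2) with hf
  have hderiv : ∀ x ∈ interior (Set.Ici (1 : ℝ)), 0 ≤ deriv f x := by
    intro x hx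
    rw [interior_Ici] at hx
    have hx0 : (0 : ℝ) < x := lt_trans one_pos hx
    have hx0' : x ≠ 0 := ne_of_gt hx0
    have h2x : (2 * x ^ 2 : ℝ) ≠ 0 := by positivity
    have hd : HasDerivAt f ((x - 1) ^ 2 / x ^ 3) x := by
      have h1 : HasDerivAt Real.log x⁻¹ x := Real.hasDerivAt_log hx0'
      have h2 : HasDerivAt (fun y : ℝ => (y - 1) / y)
          ((1 * x - (x - 1) * 1) / x ^ 2) x :=
        ((hasDerivAt_id x).sub_const 1).div (hasDerivAt_id x) hx0'
      have h3 : HasDerivAt (fun y : ℝ => (y - 1) ^ 2 / (2 * y ^ 2))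
          (((2 * (x - 1) ^ 1 * 1) * (2 * x ^ 2) - (x - 1) ^ 2 * (2 * (2 * x ^ 1))) / (2 * x ^ 2) ^ 2) x := by
        exact (((hasDerivAt_id x).sub_const 1).pow 2).div
          (((hasDerivAt_pow 2 x)).const_mul 2) h2x
      have := (h1.fun_sub h2).fun_sub h3
      refine this.congr_deriv ?_
      field_simp
      try ring
    rw [hd.deriv]
    positivity
  have hcont : ContinuousOn f (Set.Ici 1) := by
    intro x hx
    have hx0 : (0:ℝ) < x := lt_of_lt_of_le one_pos hx
    apply ContinuousWithinAt.sub
    apply ContinuousWithinAt.sub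
    · exact (Real.continuousAt_log (ne_of_gt hx0)).continuousWithinAt
    · exact ((continuous_id.sub continuous_const).continuousWithinAt).div
        continuous_id.continuousWithinAt (ne_of_gt hx0)
    · exact (((continuous_id.sub continuous_const).pow 2).continuousWithinAt).div
        ((continuous_const.mul (continuous_pow 2)).continuousWithinAt) (by positivity)
  have hmono : MonotoneOn f (Set.Ici 1) := by
    apply monotoneOn_of_deriv_nonneg (convex_Ici 1) hcont _ hderiv
    intro x hx
    rw [interior_Ici] at hx
    have hx0 : (0 : ℝ) < x := lt_trans one_pos hx
    have h1 : HasDerivAt Real.log x⁻¹ x := Real.hasDerivAt_log (ne_of_gt hx0)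
    have h2 : HasDerivAt (fun y : ℝ => (y - 1) / y)
        ((1 * x - (x - 1) * 1) / x ^ 2) x :=
      ((hasDerivAt_id x).sub_const 1).div (hasDerivAt_id x) (ne_of_gt hx0)
    have h3 : HasDerivAt (fun y : ℝ => (y - 1) ^ 2 / (2 * y ^ 2))
        (((2 * (x - 1) ^ 1 * 1) * (2 * x ^ 2) - (x - 1) ^ 2 * (2 * (2 * x ^ 1))) / (2 * x ^ 2) ^ 2) x :=
      (((hasDerivAt_id x).sub_const 1).pow 2).div
        (((hasDerivAt_pow 2 x)).const_mul 2) (by positivity)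
    exact ((h1.sub h2).sub h3).differentiableAt.differentiableWithinAt
  have h1 : f 1 ≤ f t := hmono (by simp) (by simpa using ht) ht
  have hf1 : f 1 = 0 := by simp [hf]
  have : 0 ≤ f t := hf1 ▸ h1
  simp only [hf] at this
  linarith

open Real

private lemma logAuxB {s : ℝ} (hs0 : 0 < s) (hs1 : s ≤ 1) :
    (s - 1) - (1 - s) ^ 2 / (2 * s) ≤ Real.log s := by
  set g : ℝ → ℝ := fun x => Real.log x - (x - 1) + (1 - x) ^ 2 / (2 * x) with hg
  have hder : ∀ x : ℝ, 0 < x → HasDerivAt g ((x⁻¹ - 1) + ((2 * (1 - x) ^ 1 * (-1)) * (2 * x) - (1 - x) ^ 2 * 2) / (2 * x) ^ 2) x := by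
    intro x hx0
    have h1 : HasDerivAt (fun y : ℝ => Real.log y - (y - 1)) (x⁻¹ - 1) x :=
      (Real.hasDerivAt_log (ne_of_gt hx0)).sub ((hasDerivAt_id x).sub_const 1)
    have h3 : HasDerivAt (fun y : ℝ => (1 - y) ^ 2 / (2 * y))
        (((2 * (1 - x) ^ 1 * (-1)) * (2 * x) - (1 - x) ^ 2 * 2) / (2 * x) ^ 2) x := by
      have hnum : HasDerivAt (fun y : ℝ => (1 - y) ^ 2) (2 * (1 - x) ^ 1 * (-1)) x := by
        have : HasDerivAt (fun y : ℝ => 1 - y) (-1) x := by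
          simpa using (hasDerivAt_id x).const_sub 1
        simpa using this.fun_pow 2
      have hden : HasDerivAt (fun y : ℝ => 2 * y) 2 x := by
        simpa using (hasDerivAt_id x).const_mul 2
      exact hnum.div hden (by positivity)
    exact h1.add h3
  have hanti : AntitoneOn g (Set.Ioc 0 1) := by
    apply antitoneOn_of_deriv_nonpos (convex_Ioc 0 1)
    · intro x hx
      exact (hder x hx.1).continuousAt.continuousWithinAt
    · intro x hx
      rw [interior_Ioc] at hx
      exact (hder x hx.1).differentiableAt.differentiableWithinAt
    · intro x hx
      rw [interior_Ioc] at hx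
      have hx0 := hx.1
      rw [(hder x hx0).deriv]
      have hx1 := hx.2
      have heq : x⁻¹ - 1 + (2 * (1 - x) ^ 1 * -1 * (2 * x) - (1 - x) ^ 2 * 2) / (2 * x) ^ 2
          = -((x - 1) ^ 2 / (2 * x ^ 2)) := by
        field_simp
        ring
      rw [heq]
      have : (0:ℝ) ≤ (x - 1) ^ 2 / (2 * x ^ 2) := by positivity
      linarith
  have h1 : g 1 ≤ g s := hanti ⟨hs0, hs1⟩ (by simp) hs1
  have hg1 : g 1 = 0 := by simp [hg]
  have : 0 ≤ g s := hg1 ▸ h1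
  simp only [hg] at this
  linarith

private lemma klBer_lower (p q : ℝ) (hq : 0 < q) (hqp : q ≤ p) (hp : p < 1) :
    (p - q) ^ 2 / (2 * p * (1 - q)) ≤ klBer p q := by
  have hp0 : 0 < p := lt_of_lt_of_le hq hqp
  have hq1 : 0 < 1 - q := by linarith
  have hp1 : 0 < 1 - p := by linarith
  -- first term
  have hA := logAuxA (t := p / q) ((one_le_div hq).mpr hqp)
  have e1 : (p / q - 1) / (p / q) + (p / q - 1) ^ 2 / (2 * (p / q) ^ 2)
      = (p - q) / p + (p - q) ^ 2 / (2 * p ^ 2) := by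
    field_simp
    try ring
  rw [e1] at hA
  have L1 : (p - q) + (p - q) ^ 2 / (2 * p) ≤ p * Real.log (p / q) := by
    have h := mul_le_mul_of_nonneg_left hA hp0.le
    have e2 : p * ((p - q) / p + (p - q) ^ 2 / (2 * p ^ 2))
        = (p - q) + (p - q) ^ 2 / (2 * p) := by
      field_simp
      try ring
    linarith [e2 ▸ h]
  -- second term
  have hB := logAuxB (s := (1 - p) / (1 - q)) (by positivity)
    ((div_le_one hq1).mpr (by linarith))
  have e3 : ((1 - p) / (1 - q) - 1) - (1 - (1 - p) / (1 - q)) ^ 2 / (2 * ((1 - p) / (1 - q)))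
      = (q - p) / (1 - q) - (p - q) ^ 2 / (2 * (1 - q) * (1 - p)) := by
    field_simp
    try ring
  rw [e3] at hB
  have L2 : (q - p) * (1 - p) / (1 - q) - (p - q) ^ 2 / (2 * (1 - q))
      ≤ (1 - p) * Real.log ((1 - p) / (1 - q)) := by
    have h := mul_le_mul_of_nonneg_left hB hp1.le
    have e4 : (1 - p) * ((q - p) / (1 - q) - (p - q) ^ 2 / (2 * (1 - q) * (1 - p)))
        = (q - p) * (1 - p) / (1 - q) - (p - q) ^ 2 / (2 * (1 - q)) := by
      field_simp
      try ring
    linarith [e4 ▸ h]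
  -- combine
  have e5 : ((p - q) + (p - q) ^ 2 / (2 * p))
      + ((q - p) * (1 - p) / (1 - q) - (p - q) ^ 2 / (2 * (1 - q)))
      = (p - q) ^ 2 / (2 * p) + (p - q) ^ 2 / (2 * (1 - q)) := by
    field_simp
    try ring
  have e6 : (p - q) ^ 2 / (2 * p * (1 - q))
      ≤ (p - q) ^ 2 / (2 * p) + (p - q) ^ 2 / (2 * (1 - q)) := by
    rw [div_add_div _ _ (by positivity) (by positivity),
      div_le_div_iff₀ (by positivity) (by positivity)]
    nlinarith [mul_nonneg (mul_nonneg (mul_nonneg (sq_nonneg (p - q)) hp0.le) hq1.le)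
      (sub_nonneg.mpr hqp)]
  rw [klBer]
  linarith

/-- Lemma 12: for 0 < q ≤ p < 1,
(p−q)²/(2p(1−q)) ≤ d(p‖q) ≤ (p−q)²/(q(1−q)) and
(p−q)²/(2p(1−q)) ≤ d(q‖p) ≤ (p−q)²/(p(1−p)). -/
theorem stmt13 (p q : ℝ) (hq : 0 < q) (hqp : q ≤ p) (hp : p < 1) :
    ((p - q) ^ 2 / (2 * p * (1 - q)) ≤ klBer p q ∧
      klBer p q ≤ (p - q) ^ 2 / (q * (1 - q))) ∧
    ((p - q) ^ 2 / (2 * p * (1 - q)) ≤ klBer q p ∧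
      klBer q p ≤ (p - q) ^ 2 / (p * (1 - p))) := by
  have hp0 : 0 < p := lt_of_lt_of_le hq hqp
  have hq1 : 0 < 1 - q := by linarith
  have hp1 : 0 < 1 - p := by linarith
  refine ⟨⟨klBer_lower p q hq hqp hp, ?_⟩, ⟨?_, ?_⟩⟩
  · -- upper bound for klBer p q
    have u1 : Real.log (p / q) ≤ p / q - 1 :=
      Real.log_le_sub_one_of_pos (by positivity)
    have u2 : Real.log ((1 - p) / (1 - q)) ≤ (1 - p) / (1 - q) - 1 :=
      Real.log_le_sub_one_of_pos (by positivity)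
    have h1 := mul_le_mul_of_nonneg_left u1 hp0.le
    have h2 := mul_le_mul_of_nonneg_left u2 hp1.le
    have e : p * (p / q - 1) + (1 - p) * ((1 - p) / (1 - q) - 1)
        = (p - q) ^ 2 / (q * (1 - q)) := by
      field_simp
      try ring
    rw [klBer]
    linarith
  · -- lower bound for klBer q p via symmetry
    have h := klBer_lower (1 - q) (1 - p) (by linarith) (by linarith) (by linarith)
    have e1 : klBer (1 - q) (1 - p) = klBer q p := by
      rw [klBer, klBer]
      have e2 : (1:ℝ) - (1 - q) = q := by ring
      have e3 : (1:ℝ) - (1 - p) = p := by ring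
      rw [e2, e3]
      ring
    have e4 : ((1 - q) - (1 - p)) ^ 2 / (2 * (1 - q) * (1 - (1 - p)))
        = (p - q) ^ 2 / (2 * p * (1 - q)) := by
      rw [show ((1:ℝ) - q) - (1 - p) = p - q by ring,
        show (1:ℝ) - (1 - p) = p by ring]
      ring_nf
    rw [e1, e4] at h
    exact h
  · -- upper bound for klBer q p
    have u1 : Real.log (q / p) ≤ q / p - 1 :=
      Real.log_le_sub_one_of_pos (by positivity)
    have u2 : Real.log ((1 - q) / (1 - p)) ≤ (1 - q) / (1 - p) - 1 :=
      Real.log_le_sub_one_of_pos (by positivity)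
    have h1 := mul_le_mul_of_nonneg_left u1 hq.le
    have h2 := mul_le_mul_of_nonneg_left u2 hq1.le
    have e : q * (q / p - 1) + (1 - q) * ((1 - q) / (1 - p) - 1)
        = (p - q) ^ 2 / (p * (1 - p)) := by
      field_simp
      try ring
    rw [klBer]
    linarith
end

section
/- Let 0 < q ≤ p < 1, u, v ∈ [q,p], and 0 < η < 1. Then d((1−η)u + ηv ‖ v) ≥ (1 − 2ηp(1−q)/(q(1−p))) · d(u‖v), and d((1−η)u + ηv ‖ u) ≥ (η² q(1−p)/(2p(1−q))) · max{ d(u‖v), d(v‖u) }. -/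
open Real Set

private lemma logF1 {t : ℝ} (ht : 1 ≤ t) : Real.log t ≤ t/2 - t⁻¹/2 := by
  have h0 : (0:ℝ) < 1 := one_pos
  have key : MonotoneOn (fun s : ℝ => s/2 - s⁻¹/2 - Real.log s) (Icc 1 t) := by
    apply monotoneOn_of_hasDerivWithinAt_nonneg (convex_Icc 1 t)
      (f' := fun s => 1/2 - (-(s^2)⁻¹)/2 - s⁻¹)
    · apply ContinuousOn.sub
      apply ContinuousOn.sub
      · exact (continuousOn_id.div_const 2)
      · exact ((continuousOn_id.inv₀ (fun x hx => by
          have : (1:ℝ) ≤ x := hx.1; positivity)).div_const 2)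
      · exact ContinuousOn.log continuousOn_id (fun x hx => by
          have : (1:ℝ) ≤ x := hx.1; positivity)
    · intro x hx
      rw [interior_Icc] at hx
      have hx0 : x ≠ 0 := by have := hx.1; positivity
      exact (((hasDerivAt_id x).div_const 2).sub ((hasDerivAt_inv hx0).div_const 2)
        |>.sub (Real.hasDerivAt_log hx0)).hasDerivWithinAt
    · intro x hx
      rw [interior_Icc] at hx
      have hx1 : (1:ℝ) < x := hx.1
      have hx0 : (0:ℝ) < x := by linarith
      have h : 1/2 - (-(x^2)⁻¹)/2 - x⁻¹ = (x-1)^2/(2*x^2) := by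
        field_simp
        ring
      rw [h]; positivity
  have := key ⟨le_refl 1, ht⟩ ⟨ht, le_refl t⟩ ht
  simp [Real.log_one] at this
  linarith

private lemma logF4 {t : ℝ} (h0 : 0 < t) (ht : t ≤ 1) : t/2 - t⁻¹/2 ≤ Real.log t := by
  have key : AntitoneOn (fun s : ℝ => Real.log s - s/2 + s⁻¹/2) (Icc t 1) := by
    apply antitoneOn_of_hasDerivWithinAt_nonpos (convex_Icc t 1)
      (f' := fun s => s⁻¹ - 1/2 + (-(s^2)⁻¹)/2)
    · apply ContinuousOn.add
      apply ContinuousOn.sub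
      · exact ContinuousOn.log continuousOn_id (fun x hx => (h0.trans_le hx.1).ne')
      · exact (continuousOn_id.div_const 2)
      · exact ((continuousOn_id.inv₀ (fun x hx => (h0.trans_le hx.1).ne')).div_const 2)
    · intro x hx
      rw [interior_Icc] at hx
      have hx0 : x ≠ 0 := (h0.trans hx.1).ne'
      exact (((Real.hasDerivAt_log hx0).sub ((hasDerivAt_id x).div_const 2))
        |>.add ((hasDerivAt_inv hx0).div_const 2)).hasDerivWithinAt
    · intro x hx
      rw [interior_Icc] at hx
      have hx0 : (0:ℝ) < x := lt_trans h0 hx.1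
      have h : x⁻¹ - 1/2 + (-(x^2)⁻¹)/2 = -((x-1)^2/(2*x^2)) := by
        field_simp
        ring
      rw [h]
      have : (0:ℝ) ≤ (x-1)^2/(2*x^2) := by positivity
      linarith
  have := key ⟨le_refl t, ht⟩ ⟨ht, le_refl 1⟩ ht
  simp [Real.log_one] at this
  linarith

private lemma logF3 {t : ℝ} (ht : 1 ≤ t) : t - 1 - (t-1)^2/2 ≤ Real.log t := by
  have key : MonotoneOn (fun s : ℝ => Real.log s - (s - 1) + (s-1)^2/2) (Icc 1 t) := by
    apply monotoneOn_of_hasDerivWithinAt_nonneg (convex_Icc 1 t)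
      (f' := fun s => s⁻¹ - 1 + (2*(s-1)^1*1)/2)
    · apply ContinuousOn.add
      apply ContinuousOn.sub
      · exact ContinuousOn.log continuousOn_id (fun x hx => by
          have : (1:ℝ) ≤ x := hx.1; positivity)
      · exact (continuousOn_id.sub continuousOn_const)
      · exact (((continuousOn_id.sub continuousOn_const).pow 2).div_const 2)
    · intro x hx
      rw [interior_Icc] at hx
      have hx0 : x ≠ 0 := by have := hx.1; positivity
      exact (((Real.hasDerivAt_log hx0).sub ((hasDerivAt_id x).sub_const 1))
        |>.add ((((hasDerivAt_id x).sub_const 1).pow 2).div_const 2)).hasDerivWithinAt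
    · intro x hx
      rw [interior_Icc] at hx
      have hx1 : (1:ℝ) < x := hx.1
      have hx0 : (0:ℝ) < x := by linarith
      have h : x⁻¹ - 1 + (2*(x-1)^1*1)/2 = (x-1)^2/x := by
        field_simp
        ring
      rw [h]; positivity
  have := key ⟨le_refl 1, ht⟩ ⟨ht, le_refl t⟩ ht
  simp [Real.log_one] at this
  linarith

private lemma logF2 {t : ℝ} (h0 : 0 < t) (ht : t ≤ 1) : Real.log t ≤ t - 1 - (1-t)^2/2 := by
  have key : AntitoneOn (fun s : ℝ => (s - 1) - (1-s)^2/2 - Real.log s) (Icc t 1) := by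
    apply antitoneOn_of_hasDerivWithinAt_nonpos (convex_Icc t 1)
      (f' := fun s => 1 - (2*(1-s)^1*(0-1))/2 - s⁻¹)
    · apply ContinuousOn.sub
      apply ContinuousOn.sub
      · exact (continuousOn_id.sub continuousOn_const)
      · exact (((continuousOn_const.sub continuousOn_id).pow 2).div_const 2)
      · exact ContinuousOn.log continuousOn_id (fun x hx => (h0.trans_le hx.1).ne')
    · intro x hx
      rw [interior_Icc] at hx
      have hx0 : x ≠ 0 := (h0.trans hx.1).ne'
      exact ((((hasDerivAt_id x).sub_const 1).sub
        (((hasDerivAt_const x 1).sub (hasDerivAt_id x)).pow 2 |>.div_const 2))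
        |>.sub (Real.hasDerivAt_log hx0)).hasDerivWithinAt
    · intro x hx
      rw [interior_Icc] at hx
      have hx0 : (0:ℝ) < x := lt_trans h0 hx.1
      have h : 1 - (2*(1-x)^1*(0-1))/2 - x⁻¹ = -((x-1)^2/x) := by
        field_simp
        ring
      rw [h]
      have : (0:ℝ) ≤ (x-1)^2/x := by positivity
      linarith
  have := key ⟨le_refl t, ht⟩ ⟨ht, le_refl 1⟩ ht
  simp [Real.log_one] at this
  linarith

private lemma G_LB {a b : ℝ} (ha : 0 < a) (hb : 0 < b) :
    (a-b)^2/(2*max a b) ≤ a * Real.log (a/b) - (a-b) := by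
  have hla : Real.log (a/b) = -Real.log (b/a) := by rw [← Real.log_inv, inv_div]
  rcases le_total a b with hab | hab
  · have hF := logF1 ((one_le_div ha).2 hab)
    rw [inv_div] at hF
    have h3 := mul_le_mul_of_nonneg_left hF ha.le
    have h4 : a * ((b/a)/2 - (a/b)/2) = b/2 - a^2/(2*b) := by field_simp
    have h5 : (a-b)^2/(2*b) = a^2/(2*b) - a + b/2 := by field_simp; ring
    rw [hla, max_eq_right hab, h5]
    nlinarith
  · have ht0 : 0 < b/a := div_pos hb ha
    have hF := logF2 ht0 ((div_le_one ha).2 hab)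
    have h3 := mul_le_mul_of_nonneg_left hF ha.le
    have h4 : a * (b/a - 1 - (1-b/a)^2/2) = b - a - (a-b)^2/(2*a) := by field_simp
    rw [hla, max_eq_left hab]
    nlinarith

private lemma G_UB {a b : ℝ} (ha : 0 < a) (hb : 0 < b) :
    a * Real.log (a/b) - (a-b) ≤ (a-b)^2/(2*min a b) := by
  have hla : Real.log (a/b) = -Real.log (b/a) := by rw [← Real.log_inv, inv_div]
  rcases le_total a b with hab | hab
  · have hF := logF3 ((one_le_div ha).2 hab)
    have h3 := mul_le_mul_of_nonneg_left hF ha.le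
    have h4 : a * (b/a - 1 - (b/a-1)^2/2) = b - a - (a-b)^2/(2*a) := by field_simp; ring
    rw [hla, min_eq_left hab]
    nlinarith
  · have ht0 : 0 < b/a := div_pos hb ha
    have hF := logF4 ht0 ((div_le_one ha).2 hab)
    rw [inv_div] at hF
    have h3 := mul_le_mul_of_nonneg_left hF ha.le
    have h4 : a * ((b/a)/2 - (a/b)/2) = b/2 - a^2/(2*b) := by field_simp
    have h5 : (a-b)^2/(2*b) = a^2/(2*b) - a + b/2 := by field_simp; ring
    rw [hla, min_eq_right hab, h5]
    nlinarith


private lemma klLB {p q x y : ℝ} (hq : 0 < q) (hqp : q ≤ p) (hp : p < 1)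
    (hx : x ∈ Set.Icc q p) (hy : y ∈ Set.Icc q p) :
    (x-y)^2/(2*p*(1-q)) ≤ klBer x y := by
  have hp0 : 0 < p := hq.trans_le hqp
  have h1q : 0 < 1 - q := by linarith [hqp]
  have hx0 : 0 < x := lt_of_lt_of_le hq hx.1
  have hy0 : 0 < y := lt_of_lt_of_le hq hy.1
  have hx1 : 0 < 1 - x := by have := hx.2; linarith
  have hy1 : 0 < 1 - y := by have := hy.2; linarith
  have T1 := G_LB hx0 hy0
  have T2 := G_LB hx1 hy1
  have hmax1 : max x y ≤ p := max_le hx.2 hy.2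
  have hmax2 : max (1-x) (1-y) ≤ 1 - q := max_le (by linarith [hx.1]) (by linarith [hy.1])
  have hmaxpos1 : 0 < max x y := lt_max_of_lt_left hx0
  have hmaxpos2 : 0 < max (1-x) (1-y) := lt_max_of_lt_left hx1
  have m1 : (x-y)^2/(2*p) ≤ (x-y)^2/(2*max x y) := by gcongr
  have m2 : (x-y)^2/(2*(1-q)) ≤ ((1-x)-(1-y))^2/(2*max (1-x) (1-y)) := by
    have : ((1-x)-(1-y))^2 = (x-y)^2 := by ring
    rw [this]; gcongr
  have final : (x-y)^2/(2*p*(1-q)) ≤ (x-y)^2/(2*p) + (x-y)^2/(2*(1-q)) := by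
    have he : (x-y)^2/(2*p) + (x-y)^2/(2*(1-q)) - (x-y)^2/(2*p*(1-q))
        = (x-y)^2*(p-q)/(2*p*(1-q)) := by field_simp; ring
    have hpos : 0 ≤ (x-y)^2*(p-q)/(2*p*(1-q)) := by
      have : 0 ≤ p - q := by linarith
      positivity
    linarith
  unfold klBer
  linarith

private lemma klUB {p q x y : ℝ} (hq : 0 < q) (hqp : q ≤ p) (hp : p < 1)
    (hx : x ∈ Set.Icc q p) (hy : y ∈ Set.Icc q p) :
    klBer x y ≤ (x-y)^2/(2*q*(1-p)) := by
  have hp0 : 0 < p := hq.trans_le hqp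
  have h1p : 0 < 1 - p := by linarith
  have hx0 : 0 < x := lt_of_lt_of_le hq hx.1
  have hy0 : 0 < y := lt_of_lt_of_le hq hy.1
  have hx1 : 0 < 1 - x := by have := hx.2; linarith
  have hy1 : 0 < 1 - y := by have := hy.2; linarith
  have T1 := G_UB hx0 hy0
  have T2 := G_UB hx1 hy1
  have hmin1 : q ≤ min x y := le_min hx.1 hy.1
  have hmin2 : 1 - p ≤ min (1-x) (1-y) := le_min (by linarith [hx.2]) (by linarith [hy.2])
  have m1 : (x-y)^2/(2*min x y) ≤ (x-y)^2/(2*q) := by gcongr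
  have m2 : ((1-x)-(1-y))^2/(2*min (1-x) (1-y)) ≤ (x-y)^2/(2*(1-p)) := by
    have : ((1-x)-(1-y))^2 = (x-y)^2 := by ring
    rw [this]; gcongr
  have final : (x-y)^2/(2*q) + (x-y)^2/(2*(1-p)) ≤ (x-y)^2/(2*q*(1-p)) := by
    have he : (x-y)^2/(2*q*(1-p)) - ((x-y)^2/(2*q) + (x-y)^2/(2*(1-p)))
        = (x-y)^2*(p-q)/(2*q*(1-p)) := by field_simp; ring
    have hpos : 0 ≤ (x-y)^2*(p-q)/(2*q*(1-p)) := by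
      have : 0 ≤ p - q := by linarith
      positivity
    linarith
  unfold klBer
  linarith

private lemma klID {u v w : ℝ} (hu0 : 0 < u) (hu1 : u < 1) (hv0 : 0 < v) (hv1 : v < 1)
    (hw0 : 0 < w) (hw1 : w < 1) :
    klBer u v - klBer w v
      = (u - w) * (Real.log (u/v) - Real.log ((1-u)/(1-v))) - klBer w u := by
  have h1u : (1:ℝ) - u ≠ 0 := by linarith
  have h1v : (1:ℝ) - v ≠ 0 := by linarith
  have h1w : (1:ℝ) - w ≠ 0 := by linarith
  unfold klBer
  rw [Real.log_div hu0.ne' hv0.ne', Real.log_div hw0.ne' hv0.ne', Real.log_div hw0.ne' hu0.ne',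
      Real.log_div h1u h1v, Real.log_div h1w h1v, Real.log_div h1w h1u]
  ring

private lemma logitL {p q u v : ℝ} (hq : 0 < q) (hqp : q ≤ p) (hp : p < 1)
    (hu : u ∈ Set.Icc q p) (hv : v ∈ Set.Icc q p) :
    (u - v) * (Real.log (u/v) - Real.log ((1-u)/(1-v))) ≤ (u-v)^2/(q*(1-p)) := by
  have hp0 : 0 < p := hq.trans_le hqp
  have h1p : 0 < 1 - p := by linarith
  have hu0 : 0 < u := lt_of_lt_of_le hq hu.1
  have hv0 : 0 < v := lt_of_lt_of_le hq hv.1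
  have hu1 : 0 < 1 - u := by have := hu.2; linarith
  have hv1 : 0 < 1 - v := by have := hv.2; linarith
  have hkey : (u - v) * (Real.log (u/v) - Real.log ((1-u)/(1-v)))
      ≤ (u-v)^2/q + (u-v)^2/(1-p) := by
    rcases le_total v u with hvu | hvu
    · have l1 : Real.log (u/v) ≤ (u-v)/q := by
        have h := Real.log_le_sub_one_of_pos (div_pos hu0 hv0)
        have e : u/v - 1 = (u-v)/v := by field_simp
        have m : (u-v)/v ≤ (u-v)/q := by gcongr <;> linarith [hu.1, hu.2, hv.1, hv.2]
        linarith
      have l2 : -Real.log ((1-u)/(1-v)) ≤ (u-v)/(1-p) := by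
        have h := Real.one_sub_inv_le_log_of_pos (div_pos hu1 hv1)
        have e : 1 - ((1-u)/(1-v))⁻¹ = -((u-v)/(1-u)) := by
          rw [inv_div]; field_simp; ring
        have m : (u-v)/(1-u) ≤ (u-v)/(1-p) := by gcongr <;> linarith [hu.1, hu.2, hv.1, hv.2]
        rw [e] at h
        linarith
      have hs : 0 ≤ u - v := by linarith
      have := mul_le_mul_of_nonneg_left (add_le_add l1 l2) hs
      calc (u - v) * (Real.log (u/v) - Real.log ((1-u)/(1-v)))
          = (u - v) * (Real.log (u/v) + -Real.log ((1-u)/(1-v))) := by ring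
        _ ≤ (u - v) * ((u-v)/q + (u-v)/(1-p)) := this
        _ = (u-v)^2/q + (u-v)^2/(1-p) := by ring
    · have l1 : -((v-u)/q) ≤ Real.log (u/v) := by
        have h := Real.one_sub_inv_le_log_of_pos (div_pos hu0 hv0)
        have e : 1 - (u/v)⁻¹ = -((v-u)/u) := by rw [inv_div]; field_simp; ring
        have m : (v-u)/u ≤ (v-u)/q := by gcongr <;> linarith [hu.1, hu.2, hv.1, hv.2]
        rw [e] at h
        linarith
      have l2 : -((v-u)/(1-p)) ≤ -Real.log ((1-u)/(1-v)) := by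
        have h := Real.log_le_sub_one_of_pos (div_pos hu1 hv1)
        have e : (1-u)/(1-v) - 1 = (v-u)/(1-v) := by field_simp; ring
        have m : (v-u)/(1-v) ≤ (v-u)/(1-p) := by gcongr <;> linarith [hu.1, hu.2, hv.1, hv.2]
        linarith
      have hs : u - v ≤ 0 := by linarith
      have hbr : -((v-u)/q + (v-u)/(1-p))
          ≤ Real.log (u/v) + -Real.log ((1-u)/(1-v)) := by
        have : -((v-u)/q + (v-u)/(1-p)) = -((v-u)/q) + -((v-u)/(1-p)) := by ring
        rw [this]; exact add_le_add l1 l2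
      have := mul_le_mul_of_nonpos_left hbr hs
      calc (u - v) * (Real.log (u/v) - Real.log ((1-u)/(1-v)))
          = (u - v) * (Real.log (u/v) + -Real.log ((1-u)/(1-v))) := by ring
        _ ≤ (u - v) * -((v-u)/q + (v-u)/(1-p)) := this
        _ = (u-v)^2/q + (u-v)^2/(1-p) := by ring
  have final : (u-v)^2/q + (u-v)^2/(1-p) ≤ (u-v)^2/(q*(1-p)) := by
    have he : (u-v)^2/(q*(1-p)) - ((u-v)^2/q + (u-v)^2/(1-p))
        = (u-v)^2*(p-q)/(q*(1-p)) := by field_simp; ring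
    have hpos : 0 ≤ (u-v)^2*(p-q)/(q*(1-p)) := by
      have : 0 ≤ p - q := by linarith
      positivity
    linarith
  linarith


/-- Lemma 13: for 0 < q ≤ p < 1, u,v ∈ [q,p] and 0 < η < 1,
d((1−η)u + ηv ‖ v) ≥ (1 − 2ηp(1−q)/(q(1−p))) d(u‖v) and
d((1−η)u + ηv ‖ u) ≥ (η² q(1−p)/(2p(1−q))) max{d(u‖v), d(v‖u)}. -/
theorem stmt14 (p q u v η : ℝ) (hq : 0 < q) (hqp : q ≤ p) (hp : p < 1)
    (hu : u ∈ Set.Icc q p) (hv : v ∈ Set.Icc q p) (hη : 0 < η) (hη1 : η < 1) :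
    (1 - 2 * η * p * (1 - q) / (q * (1 - p))) * klBer u v
        ≤ klBer ((1 - η) * u + η * v) v ∧
    (η ^ 2 * q * (1 - p) / (2 * p * (1 - q))) * max (klBer u v) (klBer v u)
        ≤ klBer ((1 - η) * u + η * v) u := by
  have hp0 : 0 < p := hq.trans_le hqp
  have h1p : 0 < 1 - p := by linarith
  have h1q : 0 < 1 - q := by linarith
  set w := (1 - η) * u + η * v with hwdef
  have hw : w ∈ Set.Icc q p := by
    constructor
    · rw [hwdef]; nlinarith [hu.1, hv.1]
    · rw [hwdef]; nlinarith [hu.2, hv.2]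
  have hu0 : 0 < u := lt_of_lt_of_le hq hu.1
  have hu1 : u < 1 := lt_of_le_of_lt hu.2 hp
  have hv0 : 0 < v := lt_of_lt_of_le hq hv.1
  have hv1 : v < 1 := lt_of_le_of_lt hv.2 hp
  have hw0 : 0 < w := lt_of_lt_of_le hq hw.1
  have hw1 : w < 1 := lt_of_le_of_lt hw.2 hp
  have hID := klID hu0 hu1 hv0 hv1 hw0 hw1
  have hL := logitL hq hqp hp hu hv
  have hwuLB := klLB hq hqp hp hw hu
  have huvLB := klLB hq hqp hp hu hv
  have hwu0 : 0 ≤ klBer w u := le_trans (by positivity) hwuLB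
  constructor
  · have huw : u - w = η * (u - v) := by rw [hwdef]; ring
    have step1 : (u - w) * (Real.log (u/v) - Real.log ((1-u)/(1-v)))
        ≤ η * ((u-v)^2/(q*(1-p))) := by
      rw [huw, mul_assoc]
      exact mul_le_mul_of_nonneg_left hL hη.le
    have A1 : klBer u v - η * ((u-v)^2/(q*(1-p))) ≤ klBer w v := by linarith
    have step2 := mul_le_mul_of_nonneg_left huvLB
      (show (0:ℝ) ≤ 2*η*p*(1-q)/(q*(1-p)) by positivity)
    have eq1 : 2*η*p*(1-q)/(q*(1-p)) * ((u-v)^2/(2*p*(1-q)))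
        = η*((u-v)^2/(q*(1-p))) := by field_simp
    have expand : (1 - 2 * η * p * (1 - q) / (q * (1 - p))) * klBer u v
        = klBer u v - 2*η*p*(1-q)/(q*(1-p)) * klBer u v := by ring
    rw [expand]
    linarith
  · have hwu2 : (w - u)^2 = η^2*(u-v)^2 := by rw [hwdef]; ring
    rw [hwu2] at hwuLB
    have B2 := klUB hq hqp hp hu hv
    have B3 := klUB hq hqp hp hv hu
    have e3 : (v-u)^2 = (u-v)^2 := by ring
    rw [e3] at B3
    have hmax : max (klBer u v) (klBer v u) ≤ (u-v)^2/(2*q*(1-p)) := max_le B2 B3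
    have step := mul_le_mul_of_nonneg_left hmax
      (show (0:ℝ) ≤ η^2*q*(1-p)/(2*p*(1-q)) by positivity)
    have eq2 : η^2*q*(1-p)/(2*p*(1-q)) * ((u-v)^2/(2*q*(1-p)))
        = η^2*(u-v)^2/(4*p*(1-q)) := by field_simp; ring
    have mono : η^2*(u-v)^2/(4*p*(1-q)) ≤ η^2*(u-v)^2/(2*p*(1-q)) := by
      gcongr
      nlinarith
    calc (η ^ 2 * q * (1 - p) / (2 * p * (1 - q))) * max (klBer u v) (klBer v u)
        ≤ η^2*q*(1-p)/(2*p*(1-q)) * ((u-v)^2/(2*q*(1-p))) := step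
      _ = η^2*(u-v)^2/(4*p*(1-q)) := eq2
      _ ≤ η^2*(u-v)^2/(2*p*(1-q)) := mono
      _ ≤ klBer w u := hwuLB
end

section
/- Consider sequences p = p(n), q = q(n) with 0 < q < p < 1 and K = K(n) ≤ n such that log(p(1−q)/(q(1−p))) is bounded from above, and suppose there exists ε > 0 such that K·d(p‖q) > (1+ε)·log(n/K) for all sufficiently large n. Define τ* = (log((1−q)/(1−p)) + (1/K) log(n/K)) / log(p(1−q)/(q(1−p))). Then p − τ* = Θ(p − q) and τ* − q = Θ(p − q) as n → ∞. -/
open Filter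

/-- The threshold τ* of eq. (5.7). -/
noncomputable def tauStar (n : ℕ) (K : ℕ) (p q : ℝ) : ℝ :=
  (Real.log ((1 - q) / (1 - p)) + (1 / (K : ℝ)) * Real.log ((n : ℝ) / (K : ℝ)))
    / Real.log (p * (1 - q) / (q * (1 - p)))

lemma klBer_eq {x y : ℝ} (hx0 : 0 < x) (hx1 : x < 1) (hy0 : 0 < y) (hy1 : y < 1) :
    klBer x y = x * (Real.log x - Real.log y)
      - (1 - x) * (Real.log (1 - y) - Real.log (1 - x)) := by
  have h1x : (0:ℝ) < 1 - x := by linarith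
  have h1y : (0:ℝ) < 1 - y := by linarith
  unfold klBer
  rw [Real.log_div hx0.ne' hy0.ne', Real.log_div h1x.ne' h1y.ne']
  ring

lemma klBer_nonneg {x y : ℝ} (hx0 : 0 < x) (hx1 : x < 1) (hy0 : 0 < y) (hy1 : y < 1) :
    0 ≤ klBer x y := by
  have h1x : (0:ℝ) < 1 - x := by linarith
  have h1y : (0:ℝ) < 1 - y := by linarith
  have h1 : Real.log (y / x) ≤ y / x - 1 := Real.log_le_sub_one_of_pos (by positivity)
  have h2 : Real.log ((1 - y) / (1 - x)) ≤ (1 - y) / (1 - x) - 1 :=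
    Real.log_le_sub_one_of_pos (by positivity)
  rw [Real.log_div hy0.ne' hx0.ne'] at h1
  rw [Real.log_div h1y.ne' h1x.ne'] at h2
  have e1 : x * (y / x - 1) = y - x := by field_simp
  have e2 : (1 - x) * ((1 - y) / (1 - x) - 1) = x - y := by field_simp; ring
  rw [klBer_eq hx0 hx1 hy0 hy1]
  nlinarith [mul_le_mul_of_nonneg_left h1 hx0.le, mul_le_mul_of_nonneg_left h2 h1x.le]

lemma klBer_lower_s15 {x y : ℝ} (hy0 : 0 < y) (hyx : y < x) (hx1 : x < 1) :
    (x - y)^2 ≤ 4 * (x * (1 - y)) * klBer x y := by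
  have hx0 : 0 < x := hy0.trans hyx
  have h1x : (0:ℝ) < 1 - x := by linarith
  have h1y : (0:ℝ) < 1 - y := by linarith
  set m : ℝ := (x + y) / 2 with hm
  have hm0 : 0 < m := by rw [hm]; linarith
  have hm1 : m < 1 := by rw [hm]; linarith
  have hym : y < m := by rw [hm]; linarith
  have hmx : m < x := by rw [hm]; linarith
  have h1m : (0:ℝ) < 1 - m := by linarith
  have h0 : 0 ≤ klBer x m := klBer_nonneg hx0 hx1 hm0 hm1
  have e1 : klBer x y = klBer x m +
      (x * (Real.log m - Real.log y) - (1 - x) * (Real.log (1 - y) - Real.log (1 - m))) := by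
    rw [klBer_eq hx0 hx1 hy0 (by linarith), klBer_eq hx0 hx1 hm0 hm1]
    ring
  have l1 : m - y ≤ m * (Real.log m - Real.log y) := by
    have h := Real.log_le_sub_one_of_pos (show (0:ℝ) < y / m by positivity)
    rw [Real.log_div hy0.ne' hm0.ne'] at h
    have h2 : m * (y / m - 1) = y - m := by field_simp
    nlinarith [mul_le_mul_of_nonneg_left h hm0.le]
  have l2 : (1 - m) * (Real.log (1 - y) - Real.log (1 - m)) ≤ m - y := by
    have h := Real.log_le_sub_one_of_pos (show (0:ℝ) < (1 - y) / (1 - m) by positivity)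
    rw [Real.log_div h1y.ne' h1m.ne'] at h
    have h2 : (1 - m) * ((1 - y) / (1 - m) - 1) = m - y := by field_simp; ring
    nlinarith [mul_le_mul_of_nonneg_left h h1m.le]
  have hmid : 4 * (m - y) * (x - m) = (x - y)^2 := by rw [hm]; ring
  have hmle : m * (1 - m) ≤ x * (1 - y) := by nlinarith
  have hstep : (x - y)^2 ≤ 4 * (m * (1 - m)) * klBer x y := by
    rw [e1]
    nlinarith [mul_le_mul_of_nonneg_left l1 (show (0:ℝ) ≤ 4 * ((1 - m) * x) by positivity),
      mul_le_mul_of_nonneg_left l2 (show (0:ℝ) ≤ 4 * (m * (1 - x)) by positivity),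
      mul_nonneg (show (0:ℝ) ≤ 4 * (m * (1 - m)) by positivity) h0]
  have hkl : 0 ≤ klBer x y := klBer_nonneg hx0 hx1 hy0 (by linarith)
  nlinarith [mul_le_mul_of_nonneg_right hmle hkl]

lemma klBer_lower' {x y : ℝ} (hy0 : 0 < y) (hyx : y < x) (hx1 : x < 1) :
    (x - y)^2 ≤ 4 * (x * (1 - y)) * klBer y x := by
  have hx0 : 0 < x := hy0.trans hyx
  have h1x : (0:ℝ) < 1 - x := by linarith
  have h1y : (0:ℝ) < 1 - y := by linarith
  have hy1 : y < 1 := by linarith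
  set m : ℝ := (x + y) / 2 with hm
  have hm0 : 0 < m := by rw [hm]; linarith
  have hm1 : m < 1 := by rw [hm]; linarith
  have hym : y < m := by rw [hm]; linarith
  have hmx : m < x := by rw [hm]; linarith
  have h1m : (0:ℝ) < 1 - m := by linarith
  have h0 : 0 ≤ klBer y m := klBer_nonneg hy0 hy1 hm0 hm1
  have e1 : klBer y x = klBer y m +
      ((1 - y) * (Real.log (1 - m) - Real.log (1 - x)) - y * (Real.log x - Real.log m)) := by
    rw [klBer_eq hy0 hy1 hx0 hx1, klBer_eq hy0 hy1 hm0 hm1]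
    ring
  have l1 : x - m ≤ (1 - m) * (Real.log (1 - m) - Real.log (1 - x)) := by
    have h := Real.log_le_sub_one_of_pos (show (0:ℝ) < (1 - x) / (1 - m) by positivity)
    rw [Real.log_div h1x.ne' h1m.ne'] at h
    have h2 : (1 - m) * ((1 - x) / (1 - m) - 1) = m - x := by field_simp; ring
    nlinarith [mul_le_mul_of_nonneg_left h h1m.le]
  have l2 : m * (Real.log x - Real.log m) ≤ x - m := by
    have h := Real.log_le_sub_one_of_pos (show (0:ℝ) < x / m by positivity)
    rw [Real.log_div hx0.ne' hm0.ne'] at h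
    have h2 : m * (x / m - 1) = x - m := by field_simp
    nlinarith [mul_le_mul_of_nonneg_left h hm0.le]
  have hmid : 4 * (m - y) * (x - m) = (x - y)^2 := by rw [hm]; ring
  have hmle : m * (1 - m) ≤ x * (1 - y) := by nlinarith
  have hstep : (x - y)^2 ≤ 4 * (m * (1 - m)) * klBer y x := by
    rw [e1]
    nlinarith [mul_le_mul_of_nonneg_left l1 (show (0:ℝ) ≤ 4 * (m * (1 - y)) by positivity),
      mul_le_mul_of_nonneg_left l2 (show (0:ℝ) ≤ 4 * ((1 - m) * y) by positivity),
      mul_nonneg (show (0:ℝ) ≤ 4 * (m * (1 - m)) by positivity) h0]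
  have hkl : 0 ≤ klBer y x := klBer_nonneg hy0 hy1 hx0 hx1
  nlinarith [mul_le_mul_of_nonneg_right hmle hkl]

set_option maxHeartbeats 1000000 in
lemma core (p q t Cb ε τ : ℝ) (hq : 0 < q) (hqp : q < p) (hp : p < 1)
    (hC : Real.log (p * (1 - q) / (q * (1 - p))) ≤ Cb)
    (ht : 0 ≤ t) (hε : 0 < ε)
    (hinfo : (1 + ε) * t ≤ klBer p q)
    (hτ : τ = (Real.log ((1 - q) / (1 - p)) + t) / Real.log (p * (1 - q) / (q * (1 - p)))) :
    ε * (p - q) ≤ (4 * (1 + ε) * Real.exp Cb) * (p - τ) ∧ p - τ ≤ p - q ∧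
    (p - q) ≤ (4 * Real.exp Cb) * (τ - q) ∧ τ - q ≤ p - q := by
  have hp0 : 0 < p := hq.trans hqp
  have h1p : (0:ℝ) < 1 - p := by linarith
  have h1q : (0:ℝ) < 1 - q := by linarith
  have hδ : 0 < p - q := by linarith
  set L : ℝ := Real.log (p * (1 - q) / (q * (1 - p))) with hLdef
  have hLeq : L = (Real.log p - Real.log q) + (Real.log (1 - q) - Real.log (1 - p)) := by
    rw [hLdef, Real.log_div (by positivity) (by positivity),
      Real.log_mul hp0.ne' h1q.ne', Real.log_mul hq.ne' h1p.ne']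
    ring
  have hA' : 0 < Real.log p - Real.log q := by
    rw [← Real.log_div hp0.ne' hq.ne']
    exact Real.log_pos ((one_lt_div hq).2 hqp)
  have hB' : 0 < Real.log (1 - q) - Real.log (1 - p) := by
    rw [← Real.log_div h1q.ne' h1p.ne']
    exact Real.log_pos ((one_lt_div h1p).2 (by linarith))
  have hLpos : 0 < L := by rw [hLeq]; linarith
  have hexpL : Real.exp L = p * (1 - q) / (q * (1 - p)) := by
    rw [hLdef]; exact Real.exp_log (by positivity)
  have hM : p * (1 - q) ≤ Real.exp Cb * (q * (1 - p)) := by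
    have h1 : Real.exp L ≤ Real.exp Cb := Real.exp_le_exp.2 hC
    rw [hexpL, div_le_iff₀ (by positivity)] at h1
    linarith
  have hMpos : (0:ℝ) < Real.exp Cb := Real.exp_pos Cb
  have hA_le : q * (Real.log p - Real.log q) ≤ p - q := by
    have h := Real.log_le_sub_one_of_pos (show (0:ℝ) < p / q by positivity)
    rw [Real.log_div hp0.ne' hq.ne'] at h
    have h2 : q * (p / q - 1) = p - q := by field_simp
    nlinarith [mul_le_mul_of_nonneg_left h hq.le]
  have hB_le : (1 - p) * (Real.log (1 - q) - Real.log (1 - p)) ≤ p - q := by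
    have h := Real.log_le_sub_one_of_pos (show (0:ℝ) < (1 - q) / (1 - p) by positivity)
    rw [Real.log_div h1q.ne' h1p.ne'] at h
    have h2 : (1 - p) * ((1 - q) / (1 - p) - 1) = p - q := by field_simp; ring
    nlinarith [mul_le_mul_of_nonneg_left h h1p.le]
  have hL2 : L * (q * (1 - p)) ≤ p - q := by
    rw [hLeq]
    nlinarith [mul_le_mul_of_nonneg_right hA_le h1p.le,
      mul_le_mul_of_nonneg_right hB_le hq.le, sq_nonneg (p - q)]
  have hLP : L * (p * (1 - q)) ≤ Real.exp Cb * (p - q) := by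
    nlinarith [mul_le_mul_of_nonneg_left hM hLpos.le,
      mul_le_mul_of_nonneg_left hL2 hMpos.le]
  have hD1low : (p - q)^2 ≤ 4 * (p * (1 - q)) * klBer p q := klBer_lower_s15 hq hqp hp
  have hD2low : (p - q)^2 ≤ 4 * (p * (1 - q)) * klBer q p := klBer_lower' hq hqp hp
  have h4P : (0:ℝ) < 4 * (p * (1 - q)) := by positivity
  have hD1pos : 0 < klBer p q :=
    lt_of_lt_of_le (by positivity) ((div_le_iff₀' h4P).2 hD1low)
  have hD2pos : 0 < klBer q p :=
    lt_of_lt_of_le (by positivity) ((div_le_iff₀' h4P).2 hD2low)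
  have hsum : klBer p q + klBer q p = (p - q) * L := by
    rw [klBer_eq hp0 hp hq (by linarith), klBer_eq hq (by linarith) hp0 hp, hLeq]
    ring
  have hτ1 : p - τ = (klBer p q - t) / L := by
    rw [hτ, Real.log_div h1q.ne' h1p.ne', eq_div_iff hLpos.ne', sub_mul,
      div_mul_cancel₀ _ hLpos.ne', klBer_eq hp0 hp hq (by linarith), hLeq]
    ring
  have hτ2 : τ - q = (klBer q p + t) / L := by
    rw [hτ, Real.log_div h1q.ne' h1p.ne', eq_div_iff hLpos.ne', sub_mul,
      div_mul_cancel₀ _ hLpos.ne', klBer_eq hq (by linarith) hp0 hp, hLeq]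
    ring
  have htD1 : t ≤ klBer p q := by nlinarith [mul_nonneg hε.le ht]
  refine ⟨?_, ?_, ?_, ?_⟩
  · rw [hτ1, ← mul_div_assoc, le_div_iff₀ hLpos]
    have h1 : ε * (p - q) * L * (p * (1 - q)) ≤
        4 * (1 + ε) * Real.exp Cb * (klBer p q - t) * (p * (1 - q)) := by
      nlinarith [mul_le_mul_of_nonneg_left hLP (show (0:ℝ) ≤ ε * (p - q) by positivity),
        mul_le_mul_of_nonneg_left hD1low (show (0:ℝ) ≤ ε * Real.exp Cb by positivity),
        mul_le_mul_of_nonneg_left hinfo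
          (show (0:ℝ) ≤ 4 * Real.exp Cb * (p * (1 - q)) by positivity)]
    exact le_of_mul_le_mul_right h1 (by positivity)
  · rw [hτ1, div_le_iff₀ hLpos]
    linarith
  · rw [hτ2, ← mul_div_assoc, le_div_iff₀ hLpos]
    have h1 : (p - q) * L * (p * (1 - q)) ≤
        4 * Real.exp Cb * (klBer q p + t) * (p * (1 - q)) := by
      nlinarith [mul_le_mul_of_nonneg_left hLP hδ.le,
        mul_le_mul_of_nonneg_left hD2low hMpos.le,
        mul_nonneg (mul_nonneg (show (0:ℝ) ≤ 4 * Real.exp Cb by positivity) ht)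
          (show (0:ℝ) ≤ p * (1 - q) by positivity)]
    exact le_of_mul_le_mul_right h1 (by positivity)
  · rw [hτ2, div_le_iff₀ hLpos]
    linarith


lemma conv {δ v C c : ℝ} (hδ : 0 < δ) (hC : 0 < C) (hc : C ≤ c) (h : δ ≤ C * v) :
    δ / c ≤ v := by
  have hv : 0 < v := by nlinarith
  have hc0 : 0 < c := lt_of_lt_of_le hC hc
  rw [div_le_iff₀ hc0]
  nlinarith [mul_le_mul_of_nonneg_right hc hv.le]


/-- Lemma 14: if log(p(1−q)/(q(1−p))) is bounded from above and
K d(p‖q) > (1+ε) log(n/K) for all large n, then p − τ* = Θ(p − q) and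
τ* − q = Θ(p − q). -/
theorem stmt15 (p q : ℕ → ℝ) (K : ℕ → ℕ)
    (hpq : ∀ n, 0 < q n ∧ q n < p n ∧ p n < 1)
    (hK : ∀ n, 1 ≤ K n ∧ K n ≤ n)
    (hbdd : ∃ Cb : ℝ, ∀ n : ℕ,
      Real.log (p n * (1 - q n) / (q n * (1 - p n))) ≤ Cb)
    (hinfo : ∃ ε : ℝ, 0 < ε ∧ ∀ᶠ n : ℕ in atTop,
      (1 + ε) * Real.log ((n : ℝ) / (K n : ℝ)) < (K n : ℝ) * klBer (p n) (q n)) :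
    (∃ c : ℝ, 0 < c ∧ ∀ᶠ n : ℕ in atTop,
      (p n - q n) / c ≤ p n - tauStar n (K n) (p n) (q n) ∧
      p n - tauStar n (K n) (p n) (q n) ≤ c * (p n - q n)) ∧
    (∃ c : ℝ, 0 < c ∧ ∀ᶠ n : ℕ in atTop,
      (p n - q n) / c ≤ tauStar n (K n) (p n) (q n) - q n ∧
      tauStar n (K n) (p n) (q n) - q n ≤ c * (p n - q n)) := by
  obtain ⟨Cb, hCb⟩ := hbdd
  obtain ⟨ε, hε, hev⟩ := hinfo
  have key : ∀ᶠ n : ℕ in Filter.atTop,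
      ε * (p n - q n) ≤ (4 * (1 + ε) * Real.exp Cb) * (p n - tauStar n (K n) (p n) (q n)) ∧
      p n - tauStar n (K n) (p n) (q n) ≤ p n - q n ∧
      (p n - q n) ≤ (4 * Real.exp Cb) * (tauStar n (K n) (p n) (q n) - q n) ∧
      tauStar n (K n) (p n) (q n) - q n ≤ p n - q n := by
    filter_upwards [hev] with n hn
    obtain ⟨hq0, hqp, hp1⟩ := hpq n
    obtain ⟨hK1, hKn⟩ := hK n
    have hKr : (1:ℝ) ≤ (K n : ℝ) := by exact_mod_cast hK1
    have hKn' : (K n : ℝ) ≤ (n : ℝ) := by exact_mod_cast hKn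
    have hKpos : (0:ℝ) < (K n : ℝ) := lt_of_lt_of_le one_pos hKr
    have ht : 0 ≤ (1 / (K n : ℝ)) * Real.log ((n : ℝ) / (K n : ℝ)) :=
      mul_nonneg (by positivity) (Real.log_nonneg ((one_le_div hKpos).2 hKn'))
    have htD : (1 + ε) * ((1 / (K n : ℝ)) * Real.log ((n : ℝ) / (K n : ℝ)))
        ≤ klBer (p n) (q n) := by
      rw [show (1 + ε) * ((1 / (K n : ℝ)) * Real.log ((n : ℝ) / (K n : ℝ)))
          = ((1 + ε) * Real.log ((n : ℝ) / (K n : ℝ))) / (K n : ℝ) from by ring,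
        div_le_iff₀ hKpos]
      nlinarith [hn.le]
    exact core (p n) (q n) ((1 / (K n : ℝ)) * Real.log ((n : ℝ) / (K n : ℝ)))
      Cb ε (tauStar n (K n) (p n) (q n)) hq0 hqp hp1 (hCb n) ht hε htD rfl
  constructor
  · refine ⟨max 1 (4 * (1 + ε) * Real.exp Cb / ε),
      lt_of_lt_of_le one_pos (le_max_left _ _), ?_⟩
    filter_upwards [key] with n hn
    obtain ⟨g1, g2, _, _⟩ := hn
    obtain ⟨hq0, hqp, hp1⟩ := hpq n
    have hδ : 0 < p n - q n := by linarith
    constructor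
    · have h : p n - q n ≤ (4 * (1 + ε) * Real.exp Cb / ε) *
          (p n - tauStar n (K n) (p n) (q n)) := by
        rw [div_mul_eq_mul_div, le_div_iff₀ hε]
        nlinarith [g1]
      exact conv hδ (by positivity) (le_max_right _ _) h
    · nlinarith [mul_le_mul_of_nonneg_right
        (le_max_left 1 (4 * (1 + ε) * Real.exp Cb / ε)) hδ.le]
  · refine ⟨max 1 (4 * Real.exp Cb),
      lt_of_lt_of_le one_pos (le_max_left _ _), ?_⟩
    filter_upwards [key] with n hn
    obtain ⟨_, _, g3, g4⟩ := hn
    obtain ⟨hq0, hqp, hp1⟩ := hpq n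
    have hδ : 0 < p n - q n := by linarith
    constructor
    · exact conv hδ (by positivity) (le_max_right _ _) g3
    · nlinarith [mul_le_mul_of_nonneg_right (le_max_left 1 (4 * Real.exp Cb)) hδ.le]
end
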